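/- arXiv:2004.10471 — 6 statements merged into one kernel-verified Lean document; each statement's English description precedes it below -/
import Mathlib

section
/- For every λ in the open upper half-plane ℂ⁺ and all x, y ∈ ℝ, the Green's function G_λ satisfies the pointwise bound |G_λ(x,y)|² ≤ 1/(2|λ|) + |Re(λ)|/(2|λ|²). -/
open MeasureTheory Filter Topology

noncomputable section

/-- The square root of `lam` in the principal branch; for `lam` in the open upper
half-plane this is the square root with positive real and imaginary parts. -/
def csqrt (lam : ℂ) : ℂ := lam ^ ((1 : ℂ) / 2)

/-- The Green's function of `sgn(x)(−d²/dx²) − λ`. -/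
def greenK (lam : ℂ) (x y : ℝ) : ℂ :=
  (1 / (2 * ((1 - Complex.I) / 2) * csqrt lam)) *
    (if 0 ≤ x then
      (if 0 ≤ y then
        ((1 - Complex.I) / 2) * Complex.exp (Complex.I * csqrt lam * ((x : ℂ) + (y : ℂ)))
          + (starRingEnd ℂ) ((1 - Complex.I) / 2) *
              Complex.exp (Complex.I * csqrt lam * ((|x - y| : ℝ) : ℂ))
      else -Complex.exp (csqrt lam * (Complex.I * (x : ℂ) + (y : ℂ))))
    else
      (if 0 ≤ y then Complex.exp (csqrt lam * ((x : ℂ) + Complex.I * (y : ℂ)))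
      else -((starRingEnd ℂ) ((1 - Complex.I) / 2) *
              Complex.exp (csqrt lam * ((x : ℂ) + (y : ℂ)))
          + ((1 - Complex.I) / 2) * Complex.exp (-csqrt lam * ((|x - y| : ℝ) : ℂ)))))

/-- `ψ` is an eigenfunction of the indefinite operator `H_V = sgn(x)(−d²/dx² + V)`
with eigenvalue `lam`, in the weak sense. -/
def IsEigenpair (V : ℝ → ℂ) (lam : ℂ) (ψ : ℝ → ℂ) : Prop :=
  MemLp ψ 2 (volume : Measure ℝ) ∧
  ¬ ψ =ᵐ[(volume : Measure ℝ)] 0 ∧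
  (∃ g : ℝ → ℂ, MemLp g 2 (volume : Measure ℝ) ∧
    ∀ x : ℝ, ψ x = ψ 0 + ∫ t in (0:ℝ)..x, g t) ∧
  ∀ φ : ℝ → ℂ, ContDiff ℝ (⊤ : ℕ∞) φ → HasCompactSupport φ →
    (- ∫ x : ℝ, ψ x * deriv (deriv φ) x) + (∫ x : ℝ, V x * ψ x * φ x)
      = lam * ∫ x : ℝ, (Real.sign x : ℂ) * ψ x * φ x

/-- `lam` is an eigenvalue of the indefinite operator `H_V = sgn(x)(−d²/dx² + V)`. -/
def IsEigenvalue (V : ℝ → ℂ) (lam : ℂ) : Prop := ∃ ψ, IsEigenpair V lam ψ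

set_option maxHeartbeats 1000000 in
lemma greenK_stepA {s : ℝ} (hs : 0 ≤ s) :
    s * Real.exp (-s) ≤ (1 - Real.exp (-2*s))/2 := by
  have h := Real.self_le_sinh_iff.mpr hs
  rw [Real.sinh_eq] at h
  have he : (0:ℝ) < Real.exp (-s) := Real.exp_pos _
  have h2 : Real.exp (-2*s) = Real.exp (-s) * Real.exp (-s) := by
    rw [← Real.exp_add]; ring_nf
  have h3 : Real.exp s * Real.exp (-s) = 1 := by
    rw [← Real.exp_add]; simp
  nlinarith [mul_le_mul_of_nonneg_right h he.le]

set_option maxHeartbeats 1000000 in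
lemma greenK_key {a b t : ℝ} (ha : 0 < a) (hb : 0 < b) (ht : 0 ≤ t) :
    (1 + Real.exp (-(2*b*t)))/2 + Real.exp (-(b*t)) * Real.sin (a*t)
      ≤ 1 + |a^2 - b^2|/(a^2+b^2) := by
  have hab : (0:ℝ) < a^2 + b^2 := by positivity
  have hK : (0:ℝ) ≤ |a^2-b^2|/(a^2+b^2) := by positivity
  have hbt : 0 ≤ b*t := by positivity
  have hA := greenK_stepA hbt
  have he : (0:ℝ) < Real.exp (-(b*t)) := Real.exp_pos _
  have hrw : Real.exp (-2*(b*t)) = Real.exp (-(2*b*t)) := by ring_nf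
  rw [hrw] at hA
  have main : Real.exp (-(b*t)) * (Real.sin (a*t) - b*t) ≤ |a^2-b^2|/(a^2+b^2) := by
    rcases le_or_gt (Real.sin (a*t)) (b*t) with hsb | hsb
    · have : Real.exp (-(b*t)) * (Real.sin (a*t) - b*t) ≤ 0 :=
        mul_nonpos_of_nonneg_of_nonpos he.le (by linarith)
      linarith
    · have hat : 0 ≤ a*t := by positivity
      have hsin := Real.sin_le hat
      have htpos : 0 < t := by
        rcases ht.lt_or_eq with h | h
        · exact h
        · exfalso; rw [← h] at hsb; simp at hsb
      have hba : b < a := by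
        by_contra hc
        push_neg at hc
        have : a*t ≤ b*t := by nlinarith
        linarith
      have hKeq : |a^2-b^2| = a^2 - b^2 := abs_of_pos (by nlinarith)
      rw [hKeq]
      rcases le_or_gt (a*t) 1 with h1 | h1
      · have h2 : Real.sin (a*t) - b*t ≤ (a-b)*t := by linarith
        have h3 : Real.exp (-(b*t)) ≤ 1 := Real.exp_le_one_iff.mpr (by linarith)
        have h4 : Real.exp (-(b*t)) * (Real.sin (a*t) - b*t) ≤ (a-b)*t := by
          nlinarith
        have hx1 : a^2*t ≤ a := by nlinarith
        have hx2 : b^2*t ≤ b := by nlinarith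
        have h5 : (a-b)*t ≤ (a^2-b^2)/(a^2+b^2) := by
          rw [le_div_iff₀ hab]
          nlinarith [mul_nonneg (sub_nonneg.mpr hba.le) (sub_nonneg.mpr hx1),
            mul_nonneg (sub_nonneg.mpr hba.le) (sub_nonneg.mpr hx2)]
        linarith
      · have hsin1 := Real.sin_le_one (a*t)
        rcases le_or_gt 1 (b*t) with h2 | h2
        · have hneg : Real.exp (-(b*t)) * (Real.sin (a*t) - b*t) ≤ 0 :=
            mul_nonpos_of_nonneg_of_nonpos he.le (by linarith)
          have h0 : (0:ℝ) ≤ (a^2-b^2)/(a^2+b^2) := div_nonneg (by nlinarith) hab.le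
          linarith
        · have hmul : Real.exp (-(b*t)) * Real.exp (b*t) = 1 := by
            rw [← Real.exp_add]; simp
          have hexp : Real.exp (-(b*t)) * (1+b*t) ≤ 1 := by
            calc Real.exp (-(b*t)) * (1+b*t)
                ≤ Real.exp (-(b*t)) * Real.exp (b*t) :=
                  mul_le_mul_of_nonneg_left (by linarith [Real.add_one_le_exp (b*t)]) he.le
              _ = 1 := hmul
          have hstep3 : (1 - b*t)*(a^2+b^2) ≤ (a^2-b^2)*(1+b*t) := by
            nlinarith [mul_lt_mul_of_pos_left h1 (mul_pos ha hb),
              mul_lt_mul_of_pos_left hba hb]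
          have hq : (0:ℝ) < 1 + b*t := by nlinarith
          rw [le_div_iff₀ hab, ← mul_le_mul_iff_of_pos_right hq]
          nlinarith [mul_le_mul_of_nonneg_right hexp
              (mul_nonneg (by linarith : (0:ℝ) ≤ Real.sin (a*t) - b*t) hab.le),
            mul_le_mul_of_nonneg_right
              (show Real.sin (a*t) - b*t ≤ 1 - b*t by linarith) hab.le]
  have expand : Real.exp (-(b*t)) * (Real.sin (a*t) - b*t)
      = Real.exp (-(b*t)) * Real.sin (a*t) - b*t*Real.exp (-(b*t)) := by ring
  rw [expand] at main
  linarith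

set_option maxHeartbeats 1000000 in
lemma greenK_core {a b u v : ℝ} (ha : 0 < a) (hb : 0 < b) (hv : 0 ≤ v) (huv : v ≤ u) :
    (Real.exp (-(2*b*u)) + Real.exp (-(2*b*v)))/2
      + Real.exp (-(b*(u+v))) * Real.sin (a*(u-v)) ≤ 1 + |a^2-b^2|/(a^2+b^2) := by
  have ht : 0 ≤ u - v := by linarith
  have hk := greenK_key ha hb ht
  have e1 : Real.exp (-(2*b*u)) = Real.exp (-(2*b*v)) * Real.exp (-(2*b*(u-v))) := by
    rw [← Real.exp_add]; congr 1; ring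
  have e2 : Real.exp (-(b*(u+v))) = Real.exp (-(2*b*v)) * Real.exp (-(b*(u-v))) := by
    rw [← Real.exp_add]; congr 1; ring
  have hv1 : Real.exp (-(2*b*v)) ≤ 1 := Real.exp_le_one_iff.mpr (by nlinarith)
  have hv0 : (0:ℝ) < Real.exp (-(2*b*v)) := Real.exp_pos _
  have hsq : Real.exp (-(2*b*(u-v))) = Real.exp (-(b*(u-v)))^2 := by
    rw [pow_two, ← Real.exp_add]; congr 1; ring
  have hB : 0 ≤ (1 + Real.exp (-(2*b*(u-v))))/2
      + Real.exp (-(b*(u-v))) * Real.sin (a*(u-v)) := by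
    rw [hsq]
    nlinarith [Real.neg_one_le_sin (a*(u-v)), Real.exp_pos (-(b*(u-v))),
      sq_nonneg (1 - Real.exp (-(b*(u-v))))]
  calc (Real.exp (-(2*b*u)) + Real.exp (-(2*b*v)))/2
        + Real.exp (-(b*(u+v))) * Real.sin (a*(u-v))
      = Real.exp (-(2*b*v)) * ((1 + Real.exp (-(2*b*(u-v))))/2
          + Real.exp (-(b*(u-v))) * Real.sin (a*(u-v))) := by
        rw [e1, e2]; ring
    _ ≤ 1 * ((1 + Real.exp (-(2*b*(u-v))))/2
          + Real.exp (-(b*(u-v))) * Real.sin (a*(u-v))) :=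
        mul_le_mul_of_nonneg_right hv1 hB
    _ = _ := one_mul _
    _ ≤ 1 + |a^2-b^2|/(a^2+b^2) := hk

set_option maxHeartbeats 1000000 in
lemma greenK_habs (s : ℂ) (u v : ℝ) :
    ‖(starRingEnd ℂ) ((1 - Complex.I)/2) * Complex.exp (-s*u)
        + ((1 - Complex.I)/2) * Complex.exp (-s*v)‖ ^ 2
      = (Real.exp (-(2*s.re*u)) + Real.exp (-(2*s.re*v)))/2
        + Real.exp (-(s.re*(u+v))) * Real.sin (s.im*(u-v)) := by
  rw [Complex.sq_norm, Complex.normSq_add, Complex.normSq_mul, Complex.normSq_mul]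
  have hns : ∀ w : ℂ, Complex.normSq (Complex.exp w) = Real.exp (2*w.re) := by
    intro w
    rw [← Complex.sq_norm, Complex.norm_exp, pow_two, ← Real.exp_add]
    congr 1; ring
  rw [hns, hns, Complex.normSq_conj]
  have hα : Complex.normSq ((1 - Complex.I)/2) = 1/2 := by
    simp [Complex.normSq_apply]
    norm_num
  rw [hα]
  have hcross : (starRingEnd ℂ) ((1 - Complex.I)/2) * Complex.exp (-s*u) *
      (starRingEnd ℂ) ((1 - Complex.I)/2 * Complex.exp (-s*v))
      = (Complex.I/2) * Complex.exp (-s*u + (starRingEnd ℂ) (-s*v)) := by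
    rw [map_mul, ← Complex.exp_conj, Complex.exp_add]
    have hconj : (starRingEnd ℂ) ((1 - Complex.I)/2) = (1 + Complex.I)/2 := by
      rw [map_div₀, map_sub, Complex.conj_I, map_one, map_ofNat]; ring
    have hthis : (starRingEnd ℂ) ((1 - Complex.I)/2) * (starRingEnd ℂ) ((1 - Complex.I)/2)
        = Complex.I/2 := by
      rw [hconj]
      linear_combination (1/4 : ℂ) * Complex.I_sq
    rw [← hthis]
    ring
  rw [hcross]
  have hre : ((Complex.I/2) * Complex.exp (-s*u + (starRingEnd ℂ) (-s*v))).re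
      = -(1/2) * (Complex.exp (-s*u + (starRingEnd ℂ) (-s*v))).im := by
    simp [Complex.mul_re]
  rw [hre, Complex.exp_im]
  have hre2 : (-s*(u:ℂ) + (starRingEnd ℂ) (-s*v)).re = -(s.re*(u+v)) := by
    simp [Complex.add_re, Complex.mul_re]
    ring
  have him2 : (-s*(u:ℂ) + (starRingEnd ℂ) (-s*v)).im = -(s.im*(u-v)) := by
    simp [Complex.add_im, Complex.mul_im]
    ring
  rw [hre2, him2, Real.sin_neg]
  have e1 : 2 * (-s*(u:ℂ)).re = -(2*s.re*u) := by
    simp [Complex.mul_re]; ring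
  have e2 : 2 * (-s*(v:ℂ)).re = -(2*s.re*v) := by
    simp [Complex.mul_re]; ring
  rw [e1, e2]
  ring

set_option maxHeartbeats 1000000 in
lemma greenK_habs2 (s : ℂ) (u v : ℝ) :
    ‖((1 - Complex.I)/2) * Complex.exp (Complex.I*s*u)
        + (starRingEnd ℂ) ((1 - Complex.I)/2) * Complex.exp (Complex.I*s*v)‖ ^ 2
      = (Real.exp (-(2*s.im*u)) + Real.exp (-(2*s.im*v)))/2
        + Real.exp (-(s.im*(u+v))) * Real.sin (s.re*(u-v)) := by
  have h := greenK_habs (Complex.I * (starRingEnd ℂ) s) u v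
  have hre : (Complex.I * (starRingEnd ℂ) s).re = s.im := by
    simp [Complex.mul_re]
  have him : (Complex.I * (starRingEnd ℂ) s).im = s.re := by
    simp [Complex.mul_im]
  rw [hre, him] at h
  have e1 : (starRingEnd ℂ) (-(Complex.I * (starRingEnd ℂ) s) * (u:ℂ))
      = Complex.I * s * (u:ℂ) := by
    rw [map_mul, map_neg, map_mul, Complex.conj_I, Complex.conj_conj, Complex.conj_ofReal]
    ring
  have e2 : (starRingEnd ℂ) (-(Complex.I * (starRingEnd ℂ) s) * (v:ℂ))
      = Complex.I * s * (v:ℂ) := by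
    rw [map_mul, map_neg, map_mul, Complex.conj_I, Complex.conj_conj, Complex.conj_ofReal]
    ring
  have hkey : (starRingEnd ℂ) ((starRingEnd ℂ) ((1 - Complex.I)/2)
        * Complex.exp (-(Complex.I * (starRingEnd ℂ) s) * (u:ℂ))
      + ((1 - Complex.I)/2) * Complex.exp (-(Complex.I * (starRingEnd ℂ) s) * (v:ℂ)))
      = ((1 - Complex.I)/2) * Complex.exp (Complex.I*s*(u:ℂ))
        + (starRingEnd ℂ) ((1 - Complex.I)/2) * Complex.exp (Complex.I*s*(v:ℂ)) := by
    rw [map_add, map_mul, map_mul, Complex.conj_conj, ← Complex.exp_conj, ← Complex.exp_conj,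
      e1, e2]
  rw [← h, ← hkey, Complex.norm_conj]

set_option maxHeartbeats 1000000 in
lemma csqrt_facts {lam : ℂ} (hlam : 0 < lam.im) :
    0 < (csqrt lam).re ∧ 0 < (csqrt lam).im ∧ csqrt lam * csqrt lam = lam := by
  have hne : lam ≠ 0 := by
    intro h; rw [h] at hlam; simp at hlam
  have harg0 : 0 < Complex.arg lam := by
    rcases lt_or_eq_of_le (Complex.arg_nonneg_iff.mpr hlam.le) with h | h
    · exact h
    · exfalso
      have := (Complex.arg_eq_zero_iff).mp h.symm
      linarith [this.2]
  have hargpi : Complex.arg lam < Real.pi :=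
    Complex.arg_lt_pi_iff.mpr (Or.inr (by linarith))
  have hmul : csqrt lam * csqrt lam = lam := by
    unfold csqrt
    rw [← Complex.cpow_add _ _ hne]
    norm_num
  have hdef : csqrt lam = Complex.exp (Complex.log lam * (1/2)) := by
    unfold csqrt
    rw [Complex.cpow_def_of_ne_zero hne]
  have him : (Complex.log lam * (1/2 : ℂ)).im = Complex.arg lam / 2 := by
    simp [Complex.mul_im, Complex.log_im]; ring
  have hcos : 0 < Real.cos ((Complex.log lam * (1/2 : ℂ)).im) := by
    rw [him]
    apply Real.cos_pos_of_mem_Ioo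
    constructor <;> [linarith [Real.pi_pos]; linarith]
  have hsin : 0 < Real.sin ((Complex.log lam * (1/2 : ℂ)).im) := by
    rw [him]
    apply Real.sin_pos_of_pos_of_lt_pi <;> linarith [Real.pi_pos]
  refine ⟨?_, ?_, hmul⟩
  · rw [hdef, Complex.exp_re]
    exact mul_pos (Real.exp_pos _) hcos
  · rw [hdef, Complex.exp_im]
    exact mul_pos (Real.exp_pos _) hsin

set_option maxHeartbeats 2000000 in
/-- Lemma 3.1: sharp pointwise bound for the Green's function,
`|G_λ(x,y)|² ≤ 1/(2|λ|) + |Re λ|/(2|λ|²)` for `λ` in the open upper half-plane. -/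
theorem greenK_pointwise_bound (lam : ℂ) (hlam : 0 < lam.im) (x y : ℝ) :
    ‖greenK lam x y‖ ^ 2 ≤
      1 / (2 * ‖lam‖) + |lam.re| / (2 * ‖lam‖ ^ 2) := by
  obtain ⟨ha, hb, hss⟩ := csqrt_facts hlam
  set s := csqrt lam with hsdef
  have hA : ‖lam‖ = s.re^2 + s.im^2 := by
    rw [← hss, norm_mul, ← pow_two, Complex.sq_norm, Complex.normSq_apply]; ring
  have hRe : lam.re = s.re^2 - s.im^2 := by
    rw [← hss, Complex.mul_re]; ring
  have hApos : 0 < ‖lam‖ := by rw [hA]; positivity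
  have hKnn : (0:ℝ) ≤ |s.re^2 - s.im^2|/(s.re^2+s.im^2) := by positivity
  have hRHS : 1 / (2 * ‖lam‖) + |lam.re| / (2 * ‖lam‖ ^ 2)
      = 1/(2*‖lam‖) * (1 + |s.re^2-s.im^2|/(s.re^2+s.im^2)) := by
    rw [hRe]
    rw [show ‖lam‖ ^ 2 = ‖lam‖ * (s.re^2+s.im^2) by rw [← hA, pow_two]]
    field_simp
  have hP : ‖1 / (2 * ((1 - Complex.I)/2) * s)‖ ^ 2
      = 1/(2*‖lam‖) := by
    rw [show (2 * ((1 - Complex.I)/2) * s : ℂ) = (1 - Complex.I) * s by ring]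
    rw [norm_div, norm_one, div_pow, one_pow, norm_mul, mul_pow,
      Complex.sq_norm, Complex.sq_norm]
    rw [show Complex.normSq (1 - Complex.I) = 2 by
      simp [Complex.normSq_apply]; norm_num]
    rw [show Complex.normSq s = ‖lam‖ by
      rw [hA, Complex.normSq_apply]; ring]
  rw [hRHS]
  unfold greenK
  rw [← hsdef]
  have habsP : ∀ T : ℂ, ‖T‖ ^ 2 ≤ 1 + |s.re^2-s.im^2|/(s.re^2+s.im^2) →
      ‖1 / (2 * ((1 - Complex.I)/2) * s) * T‖ ^ 2
        ≤ 1/(2*‖lam‖) * (1 + |s.re^2-s.im^2|/(s.re^2+s.im^2)) := by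
    intro T hT
    rw [norm_mul, mul_pow, hP]
    exact mul_le_mul_of_nonneg_left hT (by positivity)
  split_ifs with hx hy hy
  -- Case 1 : 0 ≤ x, 0 ≤ y
  · apply habsP
    have hc : ((x:ℂ) + (y:ℂ)) = (((x+y : ℝ)):ℂ) := by push_cast; ring
    rw [hc]
    rw [greenK_habs2 s (x+y) |x-y|]
    have hcore := greenK_core ha hb (abs_nonneg (x-y))
      (show |x-y| ≤ x+y by rcases abs_cases (x-y) with ⟨h, _⟩ | ⟨h, _⟩ <;> rw [h] <;> linarith)
    exact hcore
  -- Case 2 : 0 ≤ x, y < 0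
  · apply habsP
    rw [norm_neg, Complex.norm_exp, pow_two, ← Real.exp_add]
    have hre : (s * (Complex.I*(x:ℂ) + (y:ℂ))).re = s.re*y - s.im*x := by
      simp [Complex.mul_re, Complex.add_re, Complex.add_im, Complex.mul_im]
    have : Real.exp ((s * (Complex.I*(x:ℂ) + (y:ℂ))).re
        + (s * (Complex.I*(x:ℂ) + (y:ℂ))).re) ≤ 1 := by
      rw [Real.exp_le_one_iff, hre]
      nlinarith [lt_of_not_ge hy]
    linarith
  -- Case 3 : x < 0, 0 ≤ y
  · apply habsP
    rw [Complex.norm_exp, pow_two, ← Real.exp_add]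
    have hre : (s * ((x:ℂ) + Complex.I*(y:ℂ))).re = s.re*x - s.im*y := by
      simp [Complex.mul_re, Complex.add_re, Complex.add_im, Complex.mul_im]
    have : Real.exp ((s * ((x:ℂ) + Complex.I*(y:ℂ))).re
        + (s * ((x:ℂ) + Complex.I*(y:ℂ))).re) ≤ 1 := by
      rw [Real.exp_le_one_iff, hre]
      nlinarith [lt_of_not_ge hx]
    linarith
  -- Case 4 : x < 0, y < 0
  · apply habsP
    rw [norm_neg]
    have hx' := lt_of_not_ge hx
    have hy' := lt_of_not_ge hy
    have hc1 : s * ((x:ℂ) + (y:ℂ)) = -s * (((-(x+y) : ℝ)):ℂ) := by push_cast; ring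
    rw [hc1]
    rw [greenK_habs s (-(x+y)) |x-y|]
    have hcore := greenK_core hb ha (abs_nonneg (x-y))
      (show |x-y| ≤ -(x+y) by rcases abs_cases (x-y) with ⟨h, _⟩ | ⟨h, _⟩ <;> rw [h] <;> linarith)
    rw [show |s.im^2 - s.re^2| = |s.re^2-s.im^2| from abs_sub_comm _ _,
      show s.im^2 + s.re^2 = s.re^2+s.im^2 from add_comm _ _] at hcore
    exact hcore
end
end

section
/- For all real numbers a > 0, b > 0 and all y ≥ 0, one has 1 + e^{−4by} + 2 e^{−2by} sin(2ay) ≤ 2·(1 + |a² − b²|/(a² + b²)). -/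
open MeasureTheory Filter Topology

noncomputable section

open Real

-- Lipschitz bound for sin
lemma sin_lip (x y : ℝ) : Real.sin x - Real.sin y ≤ |x - y| := by
  have h := Real.sin_sub_sin x y
  have h1 : |Real.sin ((x - y)/2)| ≤ |(x - y)/2| := Real.abs_sin_le_abs
  have h2 : |Real.cos ((x + y)/2)| ≤ 1 := Real.abs_cos_le_one _
  calc Real.sin x - Real.sin y = 2 * Real.sin ((x - y)/2) * Real.cos ((x + y)/2) := h
    _ ≤ |2 * Real.sin ((x - y)/2) * Real.cos ((x + y)/2)| := le_abs_self _
    _ = 2 * |Real.sin ((x - y)/2)| * |Real.cos ((x + y)/2)| := by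
        rw [abs_mul, abs_mul]; norm_num
    _ ≤ 2 * |(x - y)/2| * 1 := by
        apply mul_le_mul _ h2 (abs_nonneg _) (by positivity)
        exact mul_le_mul_of_nonneg_left h1 (by norm_num)
    _ = |x - y| := by rw [abs_div]; ring_nf

-- quadratic upper bound for exp(-u)
lemma exp_neg_le (u : ℝ) (hu : 0 ≤ u) : Real.exp (-u) ≤ 1 - u + 2/3 * u^2 := by
  have h3 : (1 + u/3)^3 ≤ Real.exp u := by
    have h := Real.add_one_le_exp (u/3)
    calc (1 + u/3)^3 ≤ (Real.exp (u/3))^3 := by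
          apply pow_le_pow_left₀ (by linarith) (by linarith)
      _ = Real.exp u := by
          rw [← Real.exp_nat_mul]; norm_num; ring_nf
  have hmul : 1 ≤ (1 - u + 2/3*u^2) * Real.exp u := by
    have hc : 0 ≤ 1 - u + 2/3 * u^2 := by nlinarith [sq_nonneg (u - 3/4)]
    calc (1:ℝ) ≤ (1 - u + 2/3*u^2) * (1 + u/3)^3 := by
          nlinarith [pow_nonneg hu 3, pow_nonneg hu 4, pow_nonneg hu 5]
      _ ≤ (1 - u + 2/3*u^2) * Real.exp u := by
          exact mul_le_mul_of_nonneg_left h3 hc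
  have key : Real.exp (-u) * Real.exp u = 1 := by
    rw [← Real.exp_add]; simp
  nlinarith [Real.exp_pos u, Real.exp_pos (-u), hmul, key]

-- t e^{-t} ≤ e^{-1}
lemma t_exp_le (t : ℝ) : t * Real.exp (-t) ≤ Real.exp (-1) := by
  have h : t ≤ Real.exp (t - 1) := by
    have := Real.add_one_le_exp (t - 1); linarith
  calc t * Real.exp (-t) ≤ Real.exp (t-1) * Real.exp (-t) := by
        exact mul_le_mul_of_nonneg_right h (Real.exp_pos _).le
    _ = Real.exp (-1) := by rw [← Real.exp_add]; ring_nf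

-- sharp case r = 1
lemma base_case (t : ℝ) (ht : 0 ≤ t) :
    Real.exp (-2*t) + 2 * Real.exp (-t) * Real.sin t ≤ 1 := by
  have hs : Real.sin t ≤ Real.sinh t := le_trans (Real.sin_le ht) (Real.self_le_sinh_iff.2 ht)
  have hsinh : Real.sinh t = (Real.exp t - Real.exp (-t))/2 := Real.sinh_eq t
  have he : Real.exp (-t) * Real.exp t = 1 := by rw [← Real.exp_add]; simp
  have h2 : Real.exp (-t) * Real.exp (-t) = Real.exp (-2*t) := by rw [← Real.exp_add]; ring_nf
  nlinarith [Real.exp_pos (-t), hs, hsinh, he, h2]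

set_option maxHeartbeats 2000000 in
lemma key_est (r t : ℝ) (hr : 0 < r) (ht : 0 ≤ t) :
    Real.exp (-2*t) + 2 * Real.exp (-t) * Real.sin (r*t) ≤ 1 + 2*|r^2-1|/(r^2+1) := by
  have hden : (0:ℝ) < r^2 + 1 := by positivity
  have hE := Real.exp_pos (-t)
  rcases le_or_gt r 3 with hr3 | hr3
  · -- case r ≤ 3 : Lipschitz argument
    have habs : |r^2 - 1| = |r-1| * (r+1) := by
      rw [show r^2 - 1 = (r-1)*(r+1) by ring, abs_mul, abs_of_pos (by linarith : (0:ℝ) < r+1)]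
    have hsin : Real.sin (r*t) ≤ Real.sin t + |r-1| * t := by
      have h := sin_lip (r*t) t
      have h2 : |r*t - t| = |r-1| * t := by
        rw [show r*t - t = (r-1)*t by ring, abs_mul, abs_of_nonneg ht]
      linarith
    have hB := base_case t ht
    have hte := t_exp_le t
    have hq : r^2 + 1 ≤ Real.exp 1 * (r+1) := by
      nlinarith [Real.exp_one_gt_d9, Real.exp_one_lt_d9,
        mul_nonneg (by linarith : (0:ℝ) ≤ 3 - r) hr.le]
    have hdiv : Real.exp (-1) ≤ (r+1)/(r^2+1) := by
      rw [le_div_iff₀ hden]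
      calc Real.exp (-1) * (r^2+1) ≤ Real.exp (-1) * (Real.exp 1 * (r+1)) :=
            mul_le_mul_of_nonneg_left hq (Real.exp_pos _).le
        _ = r + 1 := by rw [← mul_assoc, ← Real.exp_add]; simp
    have habs0 : (0:ℝ) ≤ |r-1| := abs_nonneg _
    have step1 : 2 * Real.exp (-t) * Real.sin (r*t)
        ≤ 2 * Real.exp (-t) * Real.sin t + 2 * |r-1| * (t * Real.exp (-t)) := by
      nlinarith [mul_le_mul_of_nonneg_left hsin (by positivity : (0:ℝ) ≤ 2 * Real.exp (-t))]
    have step2 : 2 * |r-1| * (t * Real.exp (-t)) ≤ 2 * |r-1| * ((r+1)/(r^2+1)) := by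
      apply mul_le_mul_of_nonneg_left (le_trans hte hdiv) (by positivity)
    have : 2 * |r-1| * ((r+1)/(r^2+1)) = 2*|r^2-1|/(r^2+1) := by
      rw [habs]; ring
    linarith
  · -- case r ≥ 3
    have hRHS : 1 + 2*|r^2-1|/(r^2+1) = (3*r^2-1)/(r^2+1) := by
      rw [abs_of_nonneg (by nlinarith : (0:ℝ) ≤ r^2 - 1)]
      field_simp; ring
    rw [hRHS, le_div_iff₀ hden]
    rcases le_or_gt (r*t) 1 with hrt | hrt
    · -- t ≤ 1/r
      have hsin2 : Real.sin (r*t) ≤ r*t := Real.sin_le (by positivity)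
      have hE2 : Real.exp (-(2*t)) ≤ 1 - 2*t + 8/3*t^2 := by
        have := exp_neg_le (2*t) (by linarith)
        nlinarith [this]
      have hE1 : Real.exp (-t) ≤ 1 - t + 2/3*t^2 := exp_neg_le t ht
      have hstep : Real.exp (-2*t) + 2 * Real.exp (-t) * Real.sin (r*t)
          ≤ (1 - 2*t + 8/3*t^2) + 2*(r*t)*(1 - t + 2/3*t^2) := by
        have h1 : 2 * Real.exp (-t) * Real.sin (r*t) ≤ 2 * (r*t) * Real.exp (-t) := by
          nlinarith [mul_le_mul_of_nonneg_left hsin2 (by positivity : (0:ℝ) ≤ 2 * Real.exp (-t))]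
        have h2 : 2 * (r*t) * Real.exp (-t) ≤ 2*(r*t)*(1 - t + 2/3*t^2) := by
          apply mul_le_mul_of_nonneg_left hE1 (by positivity)
        have h3 : Real.exp (-2*t) ≤ 1 - 2*t + 8/3*t^2 := by
          rw [show (-2*t : ℝ) = -(2*t) by ring]; exact hE2
        linarith
      refine le_trans (mul_le_mul_of_nonneg_right hstep hden.le) ?_
      nlinarith [mul_nonneg (by linarith : (0:ℝ) ≤ 1 - r*t) ht,
        mul_nonneg (mul_nonneg (by linarith : (0:ℝ) ≤ 1 - r*t) ht) ht,
        mul_nonneg (by linarith : (0:ℝ) ≤ 1 - r*t)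
          (by nlinarith : (0:ℝ) ≤ 2*(r-1)*r - (2*r-4)*(1 + r*t)),
        mul_nonneg (mul_nonneg ht ht) ht, sq_nonneg (r*t - 1), sq_nonneg t,
        mul_nonneg (by linarith : (0:ℝ) ≤ r - 3) (mul_nonneg ht ht)]
    · -- t ≥ 1/r
      have h1r : (0:ℝ) < 1/r := by positivity
      have htr : 1/r ≤ t := by rw [div_le_iff₀ hr]; nlinarith
      have hm1 : Real.exp (-2*t) ≤ Real.exp (-(2*(1/r))) := by
        apply Real.exp_le_exp.2; nlinarith
      have hm2 : Real.exp (-t) ≤ Real.exp (-(1/r)) := by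
        apply Real.exp_le_exp.2; linarith
      have hs1 : Real.sin (r*t) ≤ 1 := Real.sin_le_one _
      have hu2 : Real.exp (-(2*(1/r))) ≤ 1 - 2*(1/r) + 8/3*(1/r)^2 := by
        have := exp_neg_le (2*(1/r)) (by positivity)
        nlinarith [this]
      have hu1 : Real.exp (-(1/r)) ≤ 1 - (1/r) + 2/3*(1/r)^2 := exp_neg_le (1/r) (by positivity)
      have hf : Real.exp (-2*t) + 2 * Real.exp (-t) * Real.sin (r*t)
          ≤ 3 - 4*(1/r) + 4*(1/r)^2 := by
        have h2 : 2 * Real.exp (-t) * Real.sin (r*t) ≤ 2 * Real.exp (-(1/r)) := by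
          nlinarith [Real.exp_pos (-(1/r))]
        linarith
      refine le_trans (mul_le_mul_of_nonneg_right hf hden.le) ?_
      have hx : (1/r) * r = 1 := one_div_mul_cancel hr.ne'
      have hs1r : (1:ℝ)/r ≤ 1 := by rw [div_le_one hr]; linarith
      have e1 : (1/r) * r^2 = r := by rw [pow_two, ← mul_assoc, hx, one_mul]
      have e2 : (1/r)^2 * r^2 = 1 := by rw [show (1/r)^2*r^2 = ((1/r)*r)^2 by ring, hx, one_pow]
      have e3 : 4*(1/r)^2 - 4*(1/r) ≤ 0 := by nlinarith [mul_nonneg h1r.le (by linarith : (0:ℝ) ≤ 1 - 1/r)]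
      nlinarith [e1, e2, e3]

/-- The key scalar estimate: for `a, b > 0` and `y ≥ 0`,
`1 + e^{−4by} + 2 e^{−2by} sin(2ay) ≤ 2 (1 + |a² − b²|/(a² + b²))`. -/
theorem scalar_estimate (a b y : ℝ) (ha : 0 < a) (hb : 0 < b) (hy : 0 ≤ y) :
    1 + Real.exp (-4 * b * y) + 2 * Real.exp (-2 * b * y) * Real.sin (2 * a * y) ≤
      2 * (1 + |a ^ 2 - b ^ 2| / (a ^ 2 + b ^ 2)) := by
  have hb2 : (0:ℝ) < b^2 := by positivity
  have h := key_est (a/b) (2*b*y) (by positivity) (by positivity)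
  rw [show (a/b) * (2*b*y) = 2*a*y by field_simp,
      show -2*(2*b*y) = -4*b*y by ring,
      show -(2*b*y) = -2*b*y by ring] at h
  have e4 : 2*|(a/b)^2 - 1|/((a/b)^2+1) = 2*(|a^2-b^2|/(a^2+b^2)) := by
    rw [show (a/b)^2 - 1 = (a^2-b^2)/b^2 by field_simp,
        show (a/b)^2 + 1 = (a^2+b^2)/b^2 by field_simp,
        abs_div, abs_of_pos hb2, mul_div_assoc]
    congr 1
    rw [div_div_div_cancel_right₀]
    exact hb2.ne'
  rw [e4] at h
  linarith
end
end

section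
/- Let λ ∈ ℂ with Im(λ) > 0, let √λ denote the square root of λ with positive real and imaginary parts, and let √(−λ) denote the square root of −λ with positive imaginary part. Define μ(λ) = [1/(2i(√λ + √(−λ)))] · (1/Im(√λ) − 1/Im(√(−λ))). Then |μ(λ)| ≤ 1/|Im(λ)|. -/
open MeasureTheory Filter Topology

noncomputable section

lemma csqrt_sq {lam : ℂ} (h : lam ≠ 0) : csqrt lam * csqrt lam = lam := by
  unfold csqrt
  rw [← Complex.cpow_add _ _ h]
  norm_num

lemma im_csqrt_pos {lam : ℂ} (h : 0 < lam.im) : 0 < (csqrt lam).im := by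
  have hne : lam ≠ 0 := by
    intro h0; rw [h0] at h; simp at h
  unfold csqrt
  rw [Complex.cpow_def_of_ne_zero hne, Complex.exp_im]
  have him : (Complex.log lam * (1 / 2)).im = lam.arg / 2 := by
    simp [Complex.mul_im, Complex.log_im]
    ring
  rw [him]
  have h1 : 0 < lam.arg := by
    rcases lt_or_eq_of_le (Complex.arg_nonneg_iff.2 h.le) with h' | h'
    · exact h'
    · exfalso
      have := (Complex.arg_eq_zero_iff.1 h'.symm).2
      linarith
  have h2 : lam.arg ≤ Real.pi := Complex.arg_le_pi lam
  have hsin : 0 < Real.sin (lam.arg / 2) :=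
    Real.sin_pos_of_pos_of_lt_pi (by linarith) (by
      have : 0 < Real.pi := Real.pi_pos
      linarith)
  positivity

lemma im_csqrt_neg {lam : ℂ} (h : lam.im < 0) : (csqrt lam).im < 0 := by
  have hne : lam ≠ 0 := by
    intro h0; rw [h0] at h; simp at h
  unfold csqrt
  rw [Complex.cpow_def_of_ne_zero hne, Complex.exp_im]
  have him : (Complex.log lam * (1 / 2)).im = lam.arg / 2 := by
    simp [Complex.mul_im, Complex.log_im]
    ring
  rw [him]
  have h1 : lam.arg < 0 := Complex.arg_neg_iff.2 h
  have h2 : -Real.pi < lam.arg := Complex.neg_pi_lt_arg lam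
  have hsin : Real.sin (lam.arg / 2) < 0 :=
    Real.sin_neg_of_neg_of_neg_pi_lt (by linarith) (by linarith)
  have hexp : 0 < Real.exp (Complex.log lam * (1 / 2)).re := Real.exp_pos _
  exact mul_neg_of_pos_of_neg hexp hsin

set_option maxHeartbeats 1000000 in
/-- The eigenvalue `μ(λ)` of the rank-one operator `F_λ` in the Krein resolvent formula
satisfies `|μ(λ)| ≤ 1/|Im λ|`.  Here `√λ = csqrt lam` has positive real and imaginary
parts and `√(−λ) = −csqrt (−lam)` is the square root of `−λ` with positive imaginary
part. -/
theorem krein_eigenvalue_bound (lam : ℂ) (hlam : 0 < lam.im) :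
    ‖(1 / (2 * Complex.I * (csqrt lam + -csqrt (-lam))) *
          ((1 / (csqrt lam).im - 1 / (-csqrt (-lam)).im : ℝ) : ℂ))‖ ≤
      1 / |lam.im| := by
  have hne : lam ≠ 0 := by intro h0; rw [h0] at hlam; simp at hlam
  set a := csqrt lam with ha
  set c := csqrt (-lam) with hc
  set p := a.re with hp
  set q := a.im with hq
  set r := c.re with hr
  set s := (-c).im with hs
  have hq0 : 0 < q := im_csqrt_pos hlam
  have hs0 : 0 < s := by
    have := im_csqrt_neg (lam := -lam) (by simpa using hlam)
    simp only [hs, Complex.neg_im]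
    linarith
  have ha2 : a * a = lam := csqrt_sq hne
  have hc2 : c * c = -lam := csqrt_sq (neg_ne_zero.2 hne)
  have hpq : 2 * p * q = lam.im := by
    have := congrArg Complex.im ha2
    simp [Complex.mul_im, ← hp, ← hq] at this
    linarith
  have hrs : 2 * r * s = lam.im := by
    have := congrArg Complex.im hc2
    simp only [Complex.mul_im, Complex.neg_im] at this
    have hs' : s = -c.im := by simp [hs]
    nlinarith [this]
  have hp0 : 0 < p := by nlinarith
  have hr0 : 0 < r := by nlinarith
  -- D = a - c
  set D := a + -c with hD
  have hDre : D.re = p - r := by simp [hD, hp, hr]; ring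
  have hDim : D.im = q + s := by simp [hD, hq, hs]
  have hDne : D ≠ 0 := by
    intro h0
    rw [h0] at hDim
    simp at hDim
    linarith
  have habsD : 0 < ‖D‖ := by
    simpa using (norm_pos_iff.mpr hDne)
  have hDsq : (‖D‖) ^ 2 = (p - r) ^ 2 + (q + s) ^ 2 := by
    rw [Complex.sq_norm, Complex.normSq_apply, hDre, hDim]
    ring
  -- rewrite the LHS abs
  have hlhs : ‖(1 / (2 * Complex.I * D) * ((1 / q - 1 / s : ℝ) : ℂ))‖
      = |1 / q - 1 / s| / (2 * ‖D‖) := by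
    rw [norm_mul, norm_div, Complex.norm_real]
    simp
    ring
  rw [hlhs]
  have hlam_abs : |lam.im| = 2 * p * q := by
    rw [abs_of_pos hlam]; exact hpq.symm
  rw [hlam_abs]
  -- key inequality : p * |s - q| ≤ s * abs D
  have hkey : p * |s - q| ≤ s * ‖D‖ := by
    have hpr : s * (p - r) = p * (s - q) := by nlinarith
    have hsq : (p * |s - q|) ^ 2 ≤ (s * ‖D‖) ^ 2 := by
      have hpr2 : (s * (p - r)) ^ 2 = (p * (s - q)) ^ 2 := by rw [hpr]
      rw [mul_pow, mul_pow, hDsq, sq_abs]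
      nlinarith [sq_nonneg (s * (q + s)), hpr2]
    have h1 : 0 ≤ p * |s - q| := by positivity
    have h2 : 0 ≤ s * ‖D‖ := by positivity
    nlinarith
  have hnum : |1 / q - 1 / s| = |s - q| / (q * s) := by
    have h1 : 1 / q - 1 / s = (s - q) / (q * s) := by
      field_simp
    rw [h1, abs_div, abs_of_pos (mul_pos hq0 hs0)]
  rw [hnum]
  rw [div_div, div_le_div_iff₀ (by positivity) (by positivity)]
  nlinarith [abs_nonneg (s - q), habsD.le, mul_le_mul_of_nonneg_left hkey (le_of_lt (mul_pos hq0 hq0))]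
end
end

section
/- Let λ ∈ ℂ with Im(λ) > 0 and let √λ denote the square root of λ with Re(√λ) > 0 and Im(√λ) > 0. Then for every x ≥ 0, ∫_ℝ |G_λ(x,y)|² dy ≤ (1/(4|λ|))·[1/Re(√λ) + 2/Im(√λ)], and for every x ≤ 0, ∫_ℝ |G_λ(x,y)|² dy ≤ (1/(4|λ|))·[2/Re(√λ) + 1/Im(√λ)]. -/
open MeasureTheory Filter Topology

noncomputable section

section Helpers

open Real Set

private lemma hasDerivAt_expc (c d : ℝ) (hc : c ≠ 0) (y : ℝ) :
    HasDerivAt (fun y => Real.exp (c * y + d) / c) (Real.exp (c * y + d)) y := by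
  have h := (((hasDerivAt_id y).const_mul c).add_const d).exp.div_const c
  simpa [mul_one, mul_div_assoc, div_self hc] using h

private lemma expIntegrableOn_Ioi (c d t : ℝ) (hc : c < 0) :
    IntegrableOn (fun y : ℝ => Real.exp (c * y + d)) (Ioi t) := by
  have h := (exp_neg_integrableOn_Ioi t (b := -c) (by linarith)).const_mul (Real.exp d)
  simpa [IntegrableOn, neg_neg, ← Real.exp_add, add_comm] using h

private lemma expIntegral_Ioi (c d t : ℝ) (hc : c < 0) :
    ∫ y in Ioi t, Real.exp (c * y + d) = -(Real.exp (c * t + d) / c) := by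
  have htend : Tendsto (fun y : ℝ => Real.exp (c * y + d) / c) atTop (𝓝 0) := by
    have h1 : Tendsto (fun y : ℝ => c * y + d) atTop atBot := by
      apply tendsto_atBot_add_const_right
      exact tendsto_id.const_mul_atTop_of_neg hc
    simpa using (Real.tendsto_exp_atBot.comp h1).div_const c
  have h := integral_Ioi_of_hasDerivAt_of_tendsto
    (f := fun y => Real.exp (c * y + d) / c) (f' := fun y => Real.exp (c * y + d)) (a := t)
    (m := 0) (Continuous.continuousWithinAt (by continuity))
    (fun x _ => hasDerivAt_expc c d hc.ne x) (expIntegrableOn_Ioi c d t hc) htend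
  simpa using h

private lemma expIntegral_interval (c d s t : ℝ) (hc : c ≠ 0) :
    ∫ y in s..t, Real.exp (c * y + d)
      = Real.exp (c * t + d) / c - Real.exp (c * s + d) / c :=
  intervalIntegral.integral_eq_sub_of_hasDerivAt (fun x _ => hasDerivAt_expc c d hc x)
    (Continuous.intervalIntegrable (by continuity) s t)

private lemma integrableOn_Iio_of_comp_neg {F : ℝ → ℝ} {t : ℝ}
    (h : IntegrableOn (fun y => F (-y)) (Ioi (-t))) : IntegrableOn F (Iio t) := by
  rw [← integrable_indicator_iff measurableSet_Iio]
  have h2 := (integrable_indicator_iff measurableSet_Ioi).mpr h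
  have h3 := h2.comp_neg
  refine h3.congr ?_
  filter_upwards with y
  by_cases hy : y < t
  · simp only [indicator, mem_Ioi, mem_Iio, neg_neg]
    rw [if_pos (by linarith), if_pos hy]
  · simp only [indicator, mem_Ioi, mem_Iio, neg_neg]
    rw [if_neg (by simpa using hy), if_neg hy]

private lemma expIntegrableOn_Iio (c d t : ℝ) (hc : 0 < c) :
    IntegrableOn (fun y : ℝ => Real.exp (c * y + d)) (Iio t) := by
  apply integrableOn_Iio_of_comp_neg
  have h := expIntegrableOn_Ioi (-c) d (-t) (by linarith)
  exact h.congr_fun (fun y _ => by ring_nf) measurableSet_Ioi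

private lemma expIntegral_Iio (c d t : ℝ) (hc : 0 < c) :
    ∫ y in Iio t, Real.exp (c * y + d) = Real.exp (c * t + d) / c := by
  rw [← integral_Iic_eq_integral_Iio]
  have h := integral_comp_neg_Ioi (-t) (fun y => Real.exp (c * y + d))
  rw [neg_neg] at h
  rw [← h]
  have h2 : (∫ x in Ioi (-t), Real.exp (c * -x + d))
      = ∫ x in Ioi (-t), Real.exp (-c * x + d) := by
    congr 1; ext x; ring_nf
  rw [h2, expIntegral_Ioi (-c) d (-t) (by linarith)]
  rw [show -c * -t + d = c * t + d by ring, div_neg, neg_neg]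

private lemma quadrant_int {b x : ℝ} (hb : 0 < b) (hx : 0 ≤ x) :
    IntegrableOn
      (fun y => (Real.exp (-(b * (x + y))) + Real.exp (-(b * |x - y|))) ^ 2) (Ioi (0:ℝ)) ∧
    ∫ y in Ioi (0:ℝ), (Real.exp (-(b * (x + y))) + Real.exp (-(b * |x - y|))) ^ 2 ≤ 2 / b := by
  have hb2 : -(2*b) < 0 := by linarith
  set P1 : ℝ → ℝ := fun y => Real.exp ((-(2*b))*y + (-(2*b)*x)) with hP1
  set P2 : ℝ → ℝ := fun y => Real.exp (-(2*b*|x - y|)) with hP2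
  set P3 : ℝ → ℝ := fun y => Real.exp (-(2*b*(max x y))) with hP3
  have hmax : ∀ y : ℝ, x + y + |x - y| = 2 * max x y := by
    intro y
    rcases le_total x y with h | h
    · rw [abs_of_nonpos (by linarith), max_eq_right h]; ring
    · rw [abs_of_nonneg (by linarith), max_eq_left h]; ring
  have hid : ∀ y : ℝ, (Real.exp (-(b * (x + y))) + Real.exp (-(b * |x - y|))) ^ 2
      = P1 y + P2 y + 2 * P3 y := by
    intro y
    have e1 : Real.exp (-(b*(x+y))) ^ 2 = P1 y := by
      rw [hP1]; rw [sq, ← Real.exp_add]; congr 1; ring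
    have e2 : Real.exp (-(b*|x-y|)) ^ 2 = P2 y := by
      rw [hP2]; rw [sq, ← Real.exp_add]; congr 1; ring
    have e3 : Real.exp (-(b*(x+y))) * Real.exp (-(b*|x-y|)) = P3 y := by
      rw [hP3]; rw [← Real.exp_add]; congr 1
      have := hmax y; linear_combination (-b) * this
    rw [add_sq, e1, e2, mul_assoc, e3]; ring
  have hi1 : IntegrableOn P1 (Ioi (0:ℝ)) := expIntegrableOn_Ioi _ _ _ hb2
  have hv1 : ∫ y in Ioi (0:ℝ), P1 y = Real.exp (-(2*b)*x) / (2*b) := by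
    rw [hP1, expIntegral_Ioi _ _ _ hb2]
    rw [show (-(2*b))*0 + (-(2*b)*x) = -(2*b)*x by ring, div_neg, neg_neg]
  have hP2Ioc : EqOn (fun y => Real.exp ((2*b)*y + (-(2*b)*x))) P2 (Icc (0:ℝ) x) := by
    intro y hy
    rw [hP2]; simp only; congr 1
    rw [abs_of_nonneg (by linarith [hy.2])]; ring
  have hi2a : IntegrableOn P2 (Ioc (0:ℝ) x) := by
    apply Continuous.integrableOn_Ioc
    rw [hP2]; continuity
  have hi2b : IntegrableOn P2 (Ioi x) := by
    refine (expIntegrableOn_Ioi (-(2*b)) (2*b*x) x hb2).congr_fun (fun y hy => ?_)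
      measurableSet_Ioi
    rw [hP2]; simp only; congr 1
    rw [abs_of_nonpos (by simp at hy; linarith)]; ring
  have hi2 : IntegrableOn P2 (Ioi (0:ℝ)) := by
    rw [← Ioc_union_Ioi_eq_Ioi hx]; exact hi2a.union hi2b
  have hv2 : ∫ y in Ioi (0:ℝ), P2 y
      = (1 / (2*b) - Real.exp (-(2*b)*x) / (2*b)) + 1 / (2*b) := by
    rw [← Ioc_union_Ioi_eq_Ioi hx,
      setIntegral_union (Ioc_disjoint_Ioi le_rfl) measurableSet_Ioi hi2a hi2b]
    have ha : ∫ y in Ioc (0:ℝ) x, P2 y = 1 / (2*b) - Real.exp (-(2*b)*x) / (2*b) := by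
      rw [← intervalIntegral.integral_of_le hx]
      rw [intervalIntegral.integral_congr (g := fun y => Real.exp ((2*b)*y + (-(2*b)*x)))
        (by rw [uIcc_of_le hx]; exact fun y hy => (hP2Ioc hy).symm)]
      rw [expIntegral_interval _ _ _ _ (by positivity)]
      rw [show (2*b)*x + (-(2*b)*x) = 0 by ring, show (2*b)*0 + (-(2*b)*x) = -(2*b)*x by ring,
        Real.exp_zero]
    have hbb : ∫ y in Ioi x, P2 y = 1 / (2*b) := by
      rw [setIntegral_congr_fun measurableSet_Ioi
        (g := fun y => Real.exp ((-(2*b))*y + (2*b*x)))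
        (fun y hy => by
          rw [hP2]; simp only; congr 1
          rw [abs_of_nonpos (by simp at hy; linarith)]; ring)]
      rw [expIntegral_Ioi _ _ _ hb2]
      rw [show (-(2*b))*x + 2*b*x = 0 by ring, Real.exp_zero, div_neg, neg_neg]
    rw [ha, hbb]
  have hcontP3 : Continuous P3 := by
    rw [hP3]
    exact Real.continuous_exp.comp ((continuous_const.mul (continuous_const.max continuous_id)).neg)
  have hi3a : IntegrableOn P3 (Ioc (0:ℝ) x) := hcontP3.integrableOn_Ioc
  have hi3b : IntegrableOn P3 (Ioi x) := by
    refine (expIntegrableOn_Ioi (-(2*b)) 0 x hb2).congr_fun (fun y hy => ?_) measurableSet_Ioi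
    rw [hP3]; simp only; congr 1
    rw [max_eq_right (by simp at hy; linarith)]; ring
  have hi3 : IntegrableOn P3 (Ioi (0:ℝ)) := by
    rw [← Ioc_union_Ioi_eq_Ioi hx]; exact hi3a.union hi3b
  have hv3 : ∫ y in Ioi (0:ℝ), P3 y
      = x * Real.exp (-(2*b)*x) + Real.exp (-(2*b)*x) / (2*b) := by
    rw [← Ioc_union_Ioi_eq_Ioi hx,
      setIntegral_union (Ioc_disjoint_Ioi le_rfl) measurableSet_Ioi hi3a hi3b]
    have ha : ∫ y in Ioc (0:ℝ) x, P3 y = x * Real.exp (-(2*b)*x) := by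
      rw [setIntegral_congr_fun measurableSet_Ioc
        (g := fun _ => Real.exp (-(2*b)*x))
        (fun y hy => by
          rw [hP3]; simp only; congr 1
          rw [max_eq_left hy.2]; ring)]
      rw [setIntegral_const, Real.volume_real_Ioc_of_le hx, smul_eq_mul]
      ring
    have hbb : ∫ y in Ioi x, P3 y = Real.exp (-(2*b)*x) / (2*b) := by
      rw [setIntegral_congr_fun measurableSet_Ioi
        (g := fun y => Real.exp ((-(2*b))*y + 0))
        (fun y hy => by
          rw [hP3]; simp only; congr 1
          rw [max_eq_right (by simp at hy; linarith)]; ring)]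
      rw [expIntegral_Ioi _ _ _ hb2]
      rw [show (-(2*b))*x + 0 = -(2*b)*x by ring, div_neg, neg_neg]
    rw [ha, hbb]
  have hint : IntegrableOn
      (fun y => (Real.exp (-(b * (x + y))) + Real.exp (-(b * |x - y|))) ^ 2) (Ioi (0:ℝ)) := by
    have hsum : IntegrableOn (fun y => P1 y + P2 y + 2 * P3 y) (Ioi (0:ℝ)) :=
      (hi1.add hi2).add (hi3.const_mul 2)
    exact IntegrableOn.congr_fun hsum (fun y _ => (hid y).symm) measurableSet_Ioi
  refine ⟨hint, ?_⟩
  rw [setIntegral_congr_fun measurableSet_Ioi (fun y _ => hid y)]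
  have hi12 : IntegrableOn (fun y => P1 y + P2 y) (Ioi (0:ℝ)) := hi1.add hi2
  have hi3' : IntegrableOn (fun y => 2 * P3 y) (Ioi (0:ℝ)) := hi3.const_mul 2
  rw [integral_add hi12 hi3', integral_add hi1 hi2, MeasureTheory.integral_const_mul, hv1, hv2, hv3]
  have hmul : Real.exp (-(2*b*x)) * Real.exp (2*b*x) = 1 := by
    rw [← Real.exp_add]; simp
  have key : Real.exp (-(2*b*x)) * (1 + 2*b*x) ≤ 1 := by
    nlinarith [Real.add_one_le_exp (2*b*x), Real.exp_pos (-(2*b*x)), hmul]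
  rw [← mul_le_mul_iff_right₀ hb]
  field_simp
  rw [show b * 2 * x = 2 * b * x by ring]
  nlinarith [key, Real.exp_pos (-(2*b*x)), hb, hx]

variable {lam : ℂ} (hlam : 0 < lam.im)
include hlam

private lemma lam_ne : lam ≠ 0 := by
  intro h; rw [h] at hlam; simp at hlam

private lemma arg_mem : 0 < Complex.arg lam ∧ Complex.arg lam < Real.pi := by
  constructor
  · rcases lt_or_eq_of_le (Complex.arg_nonneg_iff.mpr hlam.le) with h | h
    · exact h
    · exfalso
      have := Complex.arg_eq_zero_iff.mp h.symm
      exact hlam.ne' this.2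
  · exact Complex.arg_lt_pi_iff.mpr (Or.inr hlam.ne')

private lemma csqrt_eq : csqrt lam
    = Complex.exp (((1:ℂ)/2) * Complex.log lam) := by
  rw [csqrt, Complex.cpow_def_of_ne_zero (lam_ne hlam)]
  ring_nf

private lemma csqrt_re_pos : 0 < (csqrt lam).re := by
  rw [csqrt_eq hlam, Complex.exp_re]
  apply mul_pos (Real.exp_pos _)
  have him : (((1:ℂ)/2) * Complex.log lam).im = Complex.arg lam / 2 := by
    simp [Complex.log_im, Complex.mul_im, Complex.div_ofNat_im]
    ring
  rw [him]
  apply Real.cos_pos_of_mem_Ioo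
  constructor
  · have := (arg_mem hlam).1; linarith [Real.pi_pos]
  · have := (arg_mem hlam).2; linarith

private lemma csqrt_im_pos : 0 < (csqrt lam).im := by
  rw [csqrt_eq hlam, Complex.exp_im]
  apply mul_pos (Real.exp_pos _)
  have him : (((1:ℂ)/2) * Complex.log lam).im = Complex.arg lam / 2 := by
    simp [Complex.log_im, Complex.mul_im, Complex.div_ofNat_im]
    ring
  rw [him]
  apply Real.sin_pos_of_pos_of_lt_pi
  · have := (arg_mem hlam).1; linarith
  · have := (arg_mem hlam).2; linarith [Real.pi_pos]

private lemma sq_abs_csqrt : ‖csqrt lam‖ ^ 2 = ‖lam‖ := by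
  rw [csqrt, Complex.norm_cpow_of_ne_zero (lam_ne hlam)]
  norm_num
  rw [← Real.rpow_natCast (‖lam‖ ^ ((1:ℝ)/2)) 2, ← Real.rpow_mul (norm_nonneg _)]
  norm_num

private lemma pre_sq : ‖1 / (2 * ((1 - Complex.I) / 2) * csqrt lam)‖ ^ 2
    = 1 / (2 * ‖lam‖) := by
  rw [norm_div, norm_one, div_pow, one_pow, norm_mul, norm_mul]
  rw [mul_pow, mul_pow, sq_abs_csqrt hlam]
  have h1 : ‖(1 - Complex.I)/2‖ ^ 2 = 1/2 := by
    rw [Complex.sq_norm]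
    simp [Complex.normSq_apply, Complex.div_re, Complex.div_im, Complex.normSq]
    norm_num
  rw [h1, Complex.norm_two]
  norm_num

end Helpers

/-- The `L²`-bounds on the Green's function used in the limiting absorption principle. -/
theorem greenK_L2_bounds (lam : ℂ) (hlam : 0 < lam.im) :
    (∀ x : ℝ, 0 ≤ x →
      (∫ y : ℝ, ‖greenK lam x y‖ ^ 2) ≤
        1 / (4 * ‖lam‖) * (1 / (csqrt lam).re + 2 / (csqrt lam).im)) ∧
    (∀ x : ℝ, x ≤ 0 →
      (∫ y : ℝ, ‖greenK lam x y‖ ^ 2) ≤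
        1 / (4 * ‖lam‖) * (2 / (csqrt lam).re + 1 / (csqrt lam).im)) := by
  have ha : 0 < (csqrt lam).re := csqrt_re_pos hlam
  have hb : 0 < (csqrt lam).im := csqrt_im_pos hlam
  have hA : 0 < ‖lam‖ := norm_pos_iff.mpr (lam_ne hlam)
  have halpha : ‖(1 - Complex.I)/2‖ ^ 2 = 1/2 := by
    rw [Complex.sq_norm]
    simp [Complex.normSq_apply, Complex.div_re, Complex.div_im, Complex.normSq]
    norm_num
  have hexp2 : ∀ r : ℝ, Real.exp r ^ 2 = Real.exp (2*r) := fun r => by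
    rw [sq, ← Real.exp_add]; ring_nf
  constructor
  · -- x ≥ 0
    intro x hx
    set g : ℝ → ℝ := fun y =>
      if y < 0 then (1/(2*‖lam‖)) * Real.exp ((2*(csqrt lam).re)*y + (-(2*(csqrt lam).im*x)))
      else (1/(2*‖lam‖)/2) *
        (Real.exp (-((csqrt lam).im*(x+y))) + Real.exp (-((csqrt lam).im*|x-y|)))^2 with hgdef
    have hquad := quadrant_int hb hx
    have hg1 : IntegrableOn g (Set.Iio (0:ℝ)) := by
      refine IntegrableOn.congr_fun ((expIntegrableOn_Iio (2*(csqrt lam).re)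
        (-(2*(csqrt lam).im*x)) 0 (by positivity)).const_mul (1/(2*‖lam‖)))
        (fun y hy => ?_) measurableSet_Iio
      rw [hgdef]; simp only
      rw [if_pos (Set.mem_Iio.mp hy)]
    have hg2 : IntegrableOn g (Set.Ici (0:ℝ)) := by
      rw [integrableOn_Ici_iff_integrableOn_Ioi]
      refine IntegrableOn.congr_fun (hquad.1.const_mul (1/(2*‖lam‖)/2))
        (fun y hy => ?_) measurableSet_Ioi
      rw [hgdef]; simp only
      rw [if_neg (not_lt.mpr (le_of_lt (Set.mem_Ioi.mp hy)))]
    have hgint : Integrable g := by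
      apply integrableOn_univ.mp
      rw [← Set.Iio_union_Ici (a := (0:ℝ))]
      exact hg1.union hg2
    have hfg : ∀ y : ℝ, ‖greenK lam x y‖ ^ 2 ≤ g y := by
      intro y
      by_cases hy : 0 ≤ y
      · have hB : ‖((1 - Complex.I)/2) * Complex.exp (Complex.I * csqrt lam * ((x:ℂ)+(y:ℂ)))
              + (starRingEnd ℂ) ((1 - Complex.I)/2) *
                  Complex.exp (Complex.I * csqrt lam * ((|x-y|:ℝ):ℂ))‖
            ≤ ‖(1 - Complex.I)/2‖ *
              (Real.exp (-((csqrt lam).im*(x+y))) + Real.exp (-((csqrt lam).im*|x-y|))) := by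
          refine le_trans (norm_add_le _ _) ?_
          rw [norm_mul, norm_mul, Complex.norm_conj, Complex.norm_exp, Complex.norm_exp]
          rw [show (Complex.I * csqrt lam * ((x:ℂ)+(y:ℂ))).re = -((csqrt lam).im*(x+y)) by
                simp [Complex.mul_re, Complex.mul_im, Complex.add_re, Complex.add_im],
              show (Complex.I * csqrt lam * ((|x-y|:ℝ):ℂ)).re = -((csqrt lam).im*|x-y|) by
                simp [Complex.mul_re, Complex.mul_im]]
          apply le_of_eq; ring
        calc ‖greenK lam x y‖ ^ 2
            = ‖1 / (2 * ((1 - Complex.I) / 2) * csqrt lam)‖ ^ 2 *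
              ‖((1 - Complex.I)/2) * Complex.exp (Complex.I * csqrt lam * ((x:ℂ)+(y:ℂ)))
                  + (starRingEnd ℂ) ((1 - Complex.I)/2) *
                      Complex.exp (Complex.I * csqrt lam * ((|x-y|:ℝ):ℂ))‖ ^ 2 := by
              rw [greenK, if_pos hx, if_pos hy, norm_mul, mul_pow]
          _ ≤ ‖1 / (2 * ((1 - Complex.I) / 2) * csqrt lam)‖ ^ 2 *
              (‖(1 - Complex.I)/2‖ *
                (Real.exp (-((csqrt lam).im*(x+y))) + Real.exp (-((csqrt lam).im*|x-y|))))^2 := by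
              exact mul_le_mul_of_nonneg_left
                (pow_le_pow_left₀ (norm_nonneg _) hB 2) (by positivity)
          _ = (1/(2*‖lam‖)/2) *
              (Real.exp (-((csqrt lam).im*(x+y))) + Real.exp (-((csqrt lam).im*|x-y|)))^2 := by
              rw [mul_pow, halpha, pre_sq hlam]; ring
          _ = g y := by rw [hgdef]; simp only; rw [if_neg (not_lt.mpr hy)]
      · have hr : (csqrt lam * (Complex.I * (x:ℂ) + (y:ℂ))).re
            = (csqrt lam).re*y - (csqrt lam).im*x := by
          simp [Complex.mul_re, Complex.mul_im, Complex.add_re, Complex.add_im]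
        calc ‖greenK lam x y‖ ^ 2
            = ‖1 / (2 * ((1 - Complex.I) / 2) * csqrt lam)‖ ^ 2 *
              Real.exp ((csqrt lam * (Complex.I * (x:ℂ) + (y:ℂ))).re) ^ 2 := by
              rw [greenK, if_pos hx, if_neg hy, norm_mul, norm_neg, Complex.norm_exp, mul_pow]
          _ = (1/(2*‖lam‖)) *
              Real.exp ((2*(csqrt lam).re)*y + (-(2*(csqrt lam).im*x))) := by
              rw [pre_sq hlam, hexp2, hr]; congr 2; ring
          _ ≤ g y := le_of_eq (by rw [hgdef]; simp only; rw [if_pos (not_le.mp hy)])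
    have step1 : (∫ y : ℝ, ‖greenK lam x y‖ ^ 2) ≤ ∫ y : ℝ, g y :=
      integral_mono_of_nonneg (Filter.Eventually.of_forall (fun y => by positivity)) hgint
        (Filter.Eventually.of_forall hfg)
    have hsplit : (∫ y : ℝ, g y) = (∫ y in Set.Iio (0:ℝ), g y) + ∫ y in Set.Ici (0:ℝ), g y :=
      (intervalIntegral.integral_Iio_add_Ici hg1 hg2).symm
    have hIio : (∫ y in Set.Iio (0:ℝ), g y) ≤ (1/(2*‖lam‖)) * (1/(2*(csqrt lam).re)) := by
      rw [setIntegral_congr_fun measurableSet_Iio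
        (g := fun y => (1/(2*‖lam‖)) *
          Real.exp ((2*(csqrt lam).re)*y + (-(2*(csqrt lam).im*x))))
        (fun y hy => by rw [hgdef]; simp only; rw [if_pos (Set.mem_Iio.mp hy)])]
      rw [MeasureTheory.integral_const_mul, expIntegral_Iio _ _ _ (by positivity)]
      have h1 : Real.exp ((2*(csqrt lam).re)*0 + (-(2*(csqrt lam).im*x))) ≤ 1 :=
        Real.exp_le_one_iff.mpr (by nlinarith)
      exact mul_le_mul_of_nonneg_left (div_le_div_of_nonneg_right h1 (by positivity)) (by positivity)
    have hIci : (∫ y in Set.Ici (0:ℝ), g y)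
        ≤ (1/(2*‖lam‖)/2) * (2/(csqrt lam).im) := by
      rw [MeasureTheory.integral_Ici_eq_integral_Ioi]
      rw [setIntegral_congr_fun measurableSet_Ioi
        (g := fun y => (1/(2*‖lam‖)/2) *
          (Real.exp (-((csqrt lam).im*(x+y))) + Real.exp (-((csqrt lam).im*|x-y|)))^2)
        (fun y hy => by
          rw [hgdef]; simp only
          rw [if_neg (not_lt.mpr (le_of_lt (Set.mem_Ioi.mp hy)))])]
      rw [MeasureTheory.integral_const_mul]
      exact mul_le_mul_of_nonneg_left hquad.2 (by positivity)
    have hfinal : (1/(2*‖lam‖)) * (1/(2*(csqrt lam).re))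
        + (1/(2*‖lam‖)/2) * (2/(csqrt lam).im)
        = 1 / (4 * ‖lam‖) * (1 / (csqrt lam).re + 2 / (csqrt lam).im) := by
      field_simp
      ring
    linarith [step1, hsplit, hIio, hIci]
  · -- x ≤ 0
    intro x hx
    have hxn : 0 ≤ -x := by linarith
    set g : ℝ → ℝ := fun y =>
      if y < 0 then (1/(2*‖lam‖)/2) *
        (Real.exp (-((csqrt lam).re*((-x)+(-y)))) + Real.exp (-((csqrt lam).re*|(-x)-(-y)|)))^2
      else (1/(2*‖lam‖)) *
        Real.exp ((-(2*(csqrt lam).im))*y + (2*(csqrt lam).re*x)) with hgdef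
    have hquad := quadrant_int ha hxn
    have hg1 : IntegrableOn g (Set.Iio (0:ℝ)) := by
      apply integrableOn_Iio_of_comp_neg (t := 0)
      rw [neg_zero]
      refine IntegrableOn.congr_fun ((hquad.1).const_mul (1/(2*‖lam‖)/2))
        (fun y hy => ?_) measurableSet_Ioi
      rw [hgdef]; simp only
      rw [if_pos (by simpa using Set.mem_Ioi.mp hy : -y < 0), neg_neg]
    have hg2 : IntegrableOn g (Set.Ici (0:ℝ)) := by
      rw [integrableOn_Ici_iff_integrableOn_Ioi]
      refine IntegrableOn.congr_fun ((expIntegrableOn_Ioi (-(2*(csqrt lam).im))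
        (2*(csqrt lam).re*x) 0 (by simp [hb])).const_mul (1/(2*‖lam‖)))
        (fun y hy => ?_) measurableSet_Ioi
      rw [hgdef]; simp only
      rw [if_neg (not_lt.mpr (le_of_lt (Set.mem_Ioi.mp hy)))]
    have hgint : Integrable g := by
      apply integrableOn_univ.mp
      rw [← Set.Iio_union_Ici (a := (0:ℝ))]
      exact hg1.union hg2
    have hfg : ∀ y : ℝ, ‖greenK lam x y‖ ^ 2 ≤ g y := by
      intro y
      rcases lt_or_eq_of_le hx with hxlt | hxeq
      · by_cases hy : 0 ≤ y
        · have hr : (csqrt lam * ((x:ℂ) + Complex.I * (y:ℂ))).re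
              = (csqrt lam).re*x - (csqrt lam).im*y := by
            simp [Complex.mul_re, Complex.mul_im, Complex.add_re, Complex.add_im]
          calc ‖greenK lam x y‖ ^ 2
              = ‖1 / (2 * ((1 - Complex.I) / 2) * csqrt lam)‖ ^ 2 *
                Real.exp ((csqrt lam * ((x:ℂ) + Complex.I * (y:ℂ))).re) ^ 2 := by
                rw [greenK, if_neg (not_le.mpr hxlt), if_pos hy, norm_mul, Complex.norm_exp, mul_pow]
            _ = (1/(2*‖lam‖)) *
                Real.exp ((-(2*(csqrt lam).im))*y + (2*(csqrt lam).re*x)) := by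
                rw [pre_sq hlam, hexp2, hr]; congr 2; ring
            _ ≤ g y := le_of_eq (by rw [hgdef]; simp only; rw [if_neg (not_lt.mpr hy)])
        · have hB : ‖(starRingEnd ℂ) ((1 - Complex.I)/2) * Complex.exp (csqrt lam * ((x:ℂ)+(y:ℂ)))
                + ((1 - Complex.I)/2) * Complex.exp (-csqrt lam * ((|x-y|:ℝ):ℂ))‖
              ≤ ‖(1 - Complex.I)/2‖ *
                (Real.exp (-((csqrt lam).re*((-x)+(-y)))) +
                  Real.exp (-((csqrt lam).re*|(-x)-(-y)|))) := by
            refine le_trans (norm_add_le _ _) ?_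
            rw [norm_mul, norm_mul, Complex.norm_conj, Complex.norm_exp, Complex.norm_exp]
            rw [show (csqrt lam * ((x:ℂ)+(y:ℂ))).re = -((csqrt lam).re*((-x)+(-y))) by
                  simp [Complex.mul_re, Complex.add_re, Complex.add_im]; ring,
                show (-csqrt lam * ((|x-y|:ℝ):ℂ)).re = -((csqrt lam).re*|(-x)-(-y)|) by
                  rw [show |(-x)-(-y)| = |x - y| by rw [show (-x)-(-y) = -(x-y) by ring, abs_neg]]
                  simp [Complex.mul_re]]
            apply le_of_eq; ring
          calc ‖greenK lam x y‖ ^ 2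
              = ‖1 / (2 * ((1 - Complex.I) / 2) * csqrt lam)‖ ^ 2 *
                ‖(starRingEnd ℂ) ((1 - Complex.I)/2) * Complex.exp (csqrt lam * ((x:ℂ)+(y:ℂ)))
                    + ((1 - Complex.I)/2) * Complex.exp (-csqrt lam * ((|x-y|:ℝ):ℂ))‖ ^ 2 := by
                rw [greenK, if_neg (not_le.mpr hxlt), if_neg hy, norm_mul, norm_neg, mul_pow]
            _ ≤ ‖1 / (2 * ((1 - Complex.I) / 2) * csqrt lam)‖ ^ 2 *
                (‖(1 - Complex.I)/2‖ *
                  (Real.exp (-((csqrt lam).re*((-x)+(-y)))) +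
                    Real.exp (-((csqrt lam).re*|(-x)-(-y)|))))^2 :=
                mul_le_mul_of_nonneg_left (pow_le_pow_left₀ (norm_nonneg _) hB 2)
                  (by positivity)
            _ = (1/(2*‖lam‖)/2) *
                (Real.exp (-((csqrt lam).re*((-x)+(-y)))) +
                  Real.exp (-((csqrt lam).re*|(-x)-(-y)|)))^2 := by
                rw [mul_pow, halpha, pre_sq hlam]; ring
            _ = g y := by rw [hgdef]; simp only; rw [if_pos (not_le.mp hy)]
      · -- x = 0
        subst hxeq
        by_cases hy : 0 ≤ y
        · have habsy : ((|0 - y| : ℝ) : ℂ) = (y : ℂ) := by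
            rw [zero_sub, abs_neg, abs_of_nonneg hy]
          have hGeq : ‖greenK lam 0 y‖^2
              = (1/(2*‖lam‖)) *
                Real.exp ((-(2*(csqrt lam).im))*y + (2*(csqrt lam).re*0)) := by
            rw [greenK, if_pos le_rfl, if_pos hy, habsy,
              show (((0:ℝ):ℂ) + (y:ℂ)) = (y:ℂ) by simp]
            rw [show ((1 - Complex.I)/2) * Complex.exp (Complex.I * csqrt lam * (y:ℂ))
                  + (starRingEnd ℂ) ((1 - Complex.I)/2) *
                      Complex.exp (Complex.I * csqrt lam * (y:ℂ))
                  = (((1 - Complex.I)/2) + (starRingEnd ℂ) ((1 - Complex.I)/2)) *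
                      Complex.exp (Complex.I * csqrt lam * (y:ℂ)) by ring,
              show ((1 - Complex.I)/2) + (starRingEnd ℂ) ((1 - Complex.I)/2) = 1 by
                rw [Complex.add_conj]; simp [Complex.div_re],
              one_mul, norm_mul, mul_pow, pre_sq hlam, Complex.norm_exp, hexp2]
            congr 2
            simp [Complex.mul_re, Complex.mul_im]
            try ring
          rw [hGeq]
          exact le_of_eq (by rw [hgdef]; simp only; rw [if_neg (not_lt.mpr hy)])
        · have hylt : y < 0 := not_le.mp hy
          have hr : (csqrt lam * (Complex.I * ((0:ℝ):ℂ) + (y:ℂ))).re = (csqrt lam).re*y := by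
            simp [Complex.mul_re, Complex.mul_im, Complex.add_re, Complex.add_im]
          have hgy : g y = (1/(2*‖lam‖)/2) * (2 * Real.exp ((csqrt lam).re*y))^2 := by
            rw [hgdef]; simp only; rw [if_pos hylt]
            congr 2
            rw [show |(-(0:ℝ))-(-y)| = -y by
              rw [neg_zero, zero_sub, abs_neg, abs_of_nonneg (by linarith)]]
            rw [show (-(0:ℝ)) + (-y) = -y by ring]
            rw [show -((csqrt lam).re * -y) = (csqrt lam).re * y by ring]
            ring
          calc ‖greenK lam 0 y‖ ^ 2
              = ‖1 / (2 * ((1 - Complex.I) / 2) * csqrt lam)‖ ^ 2 *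
                Real.exp ((csqrt lam * (Complex.I * ((0:ℝ):ℂ) + (y:ℂ))).re) ^ 2 := by
                rw [greenK, if_pos le_rfl, if_neg hy, norm_mul, norm_neg, Complex.norm_exp,
                  mul_pow]
            _ = (1/(2*‖lam‖)) * Real.exp ((csqrt lam).re*y) ^ 2 := by
                rw [pre_sq hlam, hr]
            _ ≤ g y := by
                rw [hgy]
                have hCE : 0 ≤ 1/(2*‖lam‖) * Real.exp ((csqrt lam).re*y)^2 := by
                  positivity
                nlinarith [hCE]
    have step1 : (∫ y : ℝ, ‖greenK lam x y‖ ^ 2) ≤ ∫ y : ℝ, g y :=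
      integral_mono_of_nonneg (Filter.Eventually.of_forall (fun y => by positivity)) hgint
        (Filter.Eventually.of_forall hfg)
    have hsplit : (∫ y : ℝ, g y) = (∫ y in Set.Iio (0:ℝ), g y) + ∫ y in Set.Ici (0:ℝ), g y :=
      (intervalIntegral.integral_Iio_add_Ici hg1 hg2).symm
    have hIio : (∫ y in Set.Iio (0:ℝ), g y)
        ≤ (1/(2*‖lam‖)/2) * (2/(csqrt lam).re) := by
      rw [← MeasureTheory.integral_Iic_eq_integral_Iio]
      have h := integral_comp_neg_Ioi (0:ℝ) g
      rw [neg_zero] at h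
      rw [← h]
      have heq : ∀ y ∈ Set.Ioi (0:ℝ), g (-y)
          = (1/(2*‖lam‖)/2) *
            (Real.exp (-((csqrt lam).re*((-x)+y))) + Real.exp (-((csqrt lam).re*|(-x)-y|)))^2 := by
        intro y hy
        rw [hgdef]; simp only
        rw [if_pos (by simpa using Set.mem_Ioi.mp hy : -y < 0), neg_neg]
      rw [setIntegral_congr_fun measurableSet_Ioi heq, MeasureTheory.integral_const_mul]
      exact mul_le_mul_of_nonneg_left hquad.2 (by positivity)
    have hIci : (∫ y in Set.Ici (0:ℝ), g y)
        ≤ (1/(2*‖lam‖)) * (1/(2*(csqrt lam).im)) := by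
      rw [MeasureTheory.integral_Ici_eq_integral_Ioi]
      rw [setIntegral_congr_fun measurableSet_Ioi
        (g := fun y => (1/(2*‖lam‖)) *
          Real.exp ((-(2*(csqrt lam).im))*y + (2*(csqrt lam).re*x)))
        (fun y hy => by
          rw [hgdef]; simp only
          rw [if_neg (not_lt.mpr (le_of_lt (Set.mem_Ioi.mp hy)))])]
      rw [MeasureTheory.integral_const_mul, expIntegral_Ioi _ _ _ (by simp; positivity)]
      have h1 : Real.exp ((-(2*(csqrt lam).im))*0 + (2*(csqrt lam).re*x)) ≤ 1 :=
        Real.exp_le_one_iff.mpr (by nlinarith)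
      rw [div_neg, neg_neg]
      exact mul_le_mul_of_nonneg_left (div_le_div_of_nonneg_right h1 (by positivity)) (by positivity)
    have hfinal : (1/(2*‖lam‖)/2) * (2/(csqrt lam).re)
        + (1/(2*‖lam‖)) * (1/(2*(csqrt lam).im))
        = 1 / (4 * ‖lam‖) * (2 / (csqrt lam).re + 1 / (csqrt lam).im) := by
      field_simp
      ring
    linarith [step1, hsplit, hIio, hIci]

end
end

section
/- Let λ > 0 and define u : ℝ → ℝ by u(x) = e^{√λ x} for x ≤ 0 and u(x) = √2 sin(√λ x + π/4) for x ≥ 0. Then u is a weak solution of sgn(x)(−u'') = λ u, i.e. for every smooth compactly supported φ : ℝ → ℂ one has −∫_ℝ u(x) φ''(x) dx = λ ∫_ℝ sgn(x) u(x) φ(x) dx; moreover u is square-integrable on (−∞, 0) but not square-integrable on (0, ∞). -/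
open MeasureTheory Filter Topology
open scoped ContDiff
open Set

noncomputable section

-- test aux lemmas
lemma aux_exp_int {b : ℝ} (hb : 0 < b) :
    IntegrableOn (fun x : ℝ => Real.exp (b * x)) (Set.Iio 0) volume := by
  have h1 : IntegrableOn (fun x : ℝ => Real.exp (-b * x)) (Set.Ioi 0) volume :=
    exp_neg_integrableOn_Ioi 0 hb
  have h2 : Integrable ((Set.Ioi (0:ℝ)).indicator fun x => Real.exp (-b * x)) volume :=
    (integrable_indicator_iff measurableSet_Ioi).mpr h1
  have h3 := h2.comp_neg
  have heq : (fun x : ℝ => (Set.Ioi (0:ℝ)).indicator (fun x => Real.exp (-b * x)) (-x))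
      = (Set.Iio (0:ℝ)).indicator (fun x => Real.exp (b * x)) := by
    funext x
    by_cases hx : x < 0
    · rw [Set.indicator_of_mem (by simpa using hx : -x ∈ Set.Ioi (0:ℝ)),
        Set.indicator_of_mem (by simpa using hx : x ∈ Set.Iio (0:ℝ))]
      congr 1; ring
    · rw [Set.indicator_of_notMem (by simpa using hx), Set.indicator_of_notMem (by simpa using hx)]
  rw [heq] at h3
  exact (integrable_indicator_iff measurableSet_Iio).mp h3

lemma aux_not_int {c : ℝ} (hc : 0 < c) :
    ¬ IntegrableOn (fun x : ℝ => 1 + Real.sin (c * x)) (Set.Ioi 0) volume := by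
  intro h
  set g : ℝ → ℝ := fun x => 1 + Real.sin (c * x) with hg
  have hg_cont : Continuous g := by fun_prop
  have h_int : ∀ t₁ t₂ : ℝ, IntervalIntegrable g volume t₁ t₂ := fun _ _ =>
    hg_cont.intervalIntegrable _ _
  have hT : 0 < 2 * Real.pi / c := by positivity
  have hper : Function.Periodic g (2 * Real.pi / c) := by
    intro x
    have : c * (x + 2 * Real.pi / c) = c * x + 2 * Real.pi := by field_simp
    simp only [hg, this, Real.sin_add_two_pi]
  have hpos : 0 < ∫ x in (0:ℝ)..(2 * Real.pi / c), g x := by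
    have hsin : (∫ x in (0:ℝ)..(2 * Real.pi / c), Real.sin (c * x)) = 0 := by
      rw [intervalIntegral.integral_comp_mul_left _ hc.ne']
      rw [mul_zero, show c * (2 * Real.pi / c) = 2 * Real.pi by field_simp]
      rw [integral_sin]
      simp [Real.cos_two_pi]
    have hsplit : (∫ x in (0:ℝ)..(2 * Real.pi / c), g x)
        = (∫ x in (0:ℝ)..(2 * Real.pi / c), (1:ℝ))
          + ∫ x in (0:ℝ)..(2 * Real.pi / c), Real.sin (c * x) := by
      rw [← intervalIntegral.integral_add intervalIntegrable_const
        (Continuous.intervalIntegrable (by fun_prop) _ _ :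
          IntervalIntegrable (fun x => Real.sin (c * x)) volume _ _)]
    rw [hsplit, hsin, intervalIntegral.integral_const]
    simp only [smul_eq_mul, mul_one, sub_zero, add_zero]
    positivity
  have htend := hper.tendsto_atTop_intervalIntegral_of_pos hpos hT
  obtain ⟨t, ht, ht0⟩ := ((htend.eventually_gt_atTop (∫ x in Set.Ioi (0:ℝ), g x)).and
    (eventually_ge_atTop (0:ℝ))).exists
  have hle : (∫ x in (0:ℝ)..t, g x) ≤ ∫ x in Set.Ioi (0:ℝ), g x := by
    rw [intervalIntegral.integral_of_le ht0]
    apply setIntegral_mono_set h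
    · filter_upwards with x
      have := Real.neg_one_le_sin (c * x)
      simp only [hg, Pi.zero_apply]
      linarith
    · exact HasSubset.Subset.eventuallyLE Set.Ioc_subset_Ioi_self
  linarith


section derivs
variable {lam : ℝ} (hlam : 0 < lam)

/-- derivative candidate -/
def dfun (lam : ℝ) (x : ℝ) : ℝ :=
  if x ≤ 0 then Real.sqrt lam * Real.exp (Real.sqrt lam * x)
  else Real.sqrt 2 * Real.sqrt lam * Real.cos (Real.sqrt lam * x + Real.pi / 4)

lemma base1 (s : ℝ) (x : ℝ) :
    HasDerivAt (fun y : ℝ => Real.exp (s * y)) (s * Real.exp (s * x)) x := by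
  have h := (Real.hasDerivAt_exp (s * x)).comp x ((hasDerivAt_id x).const_mul s)
  exact h.congr_deriv (by ring)

lemma base2 (s : ℝ) (x : ℝ) :
    HasDerivAt (fun y : ℝ => Real.sqrt 2 * Real.sin (s * y + Real.pi / 4))
      (Real.sqrt 2 * s * Real.cos (s * x + Real.pi / 4)) x := by
  have hin : HasDerivAt (fun y : ℝ => s * y + Real.pi / 4) s x := by
    simpa using ((hasDerivAt_id x).const_mul s).add_const (Real.pi / 4)
  have h := ((Real.hasDerivAt_sin (s * x + Real.pi / 4)).comp x hin).const_mul (Real.sqrt 2)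
  exact h.congr_deriv (by ring)

lemma base3 (s : ℝ) (x : ℝ) :
    HasDerivAt (fun y : ℝ => Real.sqrt 2 * s * Real.cos (s * y + Real.pi / 4))
      (-(s * s * (Real.sqrt 2 * Real.sin (s * x + Real.pi / 4)))) x := by
  have hin : HasDerivAt (fun y : ℝ => s * y + Real.pi / 4) s x := by
    simpa using ((hasDerivAt_id x).const_mul s).add_const (Real.pi / 4)
  have h := ((Real.hasDerivAt_cos (s * x + Real.pi / 4)).comp x hin).const_mul (Real.sqrt 2 * s)
  exact h.congr_deriv (by ring)

lemma sqrt2_sin_pi4 : Real.sqrt 2 * Real.sin (Real.pi / 4) = 1 := by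
  rw [Real.sin_pi_div_four, div_eq_mul_inv, ← mul_assoc,
    Real.mul_self_sqrt (by norm_num : (0:ℝ) ≤ 2)]
  norm_num

lemma sqrt2_cos_pi4 : Real.sqrt 2 * Real.cos (Real.pi / 4) = 1 := by
  rw [Real.cos_pi_div_four, div_eq_mul_inv, ← mul_assoc,
    Real.mul_self_sqrt (by norm_num : (0:ℝ) ≤ 2)]
  norm_num

lemma sqrt2s_cos (s : ℝ) : Real.sqrt 2 * s * Real.cos (Real.pi / 4) = s := by
  rw [mul_comm (Real.sqrt 2) s, mul_assoc, sqrt2_cos_pi4, mul_one]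

lemma aux_hasDerivAt (lam : ℝ) (u : ℝ → ℝ)
    (hu : ∀ x : ℝ, u x =
      if x ≤ 0 then Real.exp (Real.sqrt lam * x)
      else Real.sqrt 2 * Real.sin (Real.sqrt lam * x + Real.pi / 4)) (x : ℝ) :
    HasDerivAt u (dfun lam x) x := by
  set s := Real.sqrt lam with hs
  have huId : ∀ y : ℝ, 0 ≤ y → u y = Real.sqrt 2 * Real.sin (s * y + Real.pi / 4) := by
    intro y hy
    rcases eq_or_lt_of_le hy with h | h
    · rw [hu y, ← h]
      simp only [le_refl, if_true, mul_zero, zero_add, Real.exp_zero]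
      exact sqrt2_sin_pi4.symm
    · rw [hu y, if_neg (not_le.mpr h)]
  rcases lt_trichotomy x 0 with h | h | h
  · have heq : ∀ᶠ y in 𝓝 x, u y = Real.exp (s * y) := by
      filter_upwards [Iio_mem_nhds h] with y hy
      rw [hu y, if_pos hy.le]
    have hb := base1 s x
    rw [show dfun lam x = s * Real.exp (s * x) from if_pos h.le]
    exact hb.congr_of_eventuallyEq heq
  · subst h
    have hL : HasDerivWithinAt u (s * Real.exp (s * 0)) (Set.Iic 0) 0 := by
      refine (base1 s 0).hasDerivWithinAt.congr (fun y hy => ?_) ?_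
      · rw [hu y, if_pos (Set.mem_Iic.mp hy)]
      · rw [hu 0, if_pos le_rfl]
    have hR : HasDerivWithinAt u (s * Real.exp (s * 0)) (Set.Ici 0) 0 := by
      have h2 : Real.sqrt 2 * s * Real.cos (s * 0 + Real.pi / 4) = s * Real.exp (s * 0) := by
        simp only [mul_zero, zero_add, Real.exp_zero, mul_one, sqrt2s_cos]
      rw [← h2]
      exact (base2 s 0).hasDerivWithinAt.congr (fun y hy => huId y hy) (huId 0 le_rfl)
    have := hL.union hR
    rw [Set.Iic_union_Ici] at this
    rw [show dfun lam 0 = s * Real.exp (s * 0) from if_pos le_rfl]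
    exact this.hasDerivAt (by simp)
  · have heq : ∀ᶠ y in 𝓝 x, u y = Real.sqrt 2 * Real.sin (s * y + Real.pi / 4) := by
      filter_upwards [Ioi_mem_nhds h] with y hy
      exact huId y hy.le
    rw [show dfun lam x = Real.sqrt 2 * s * Real.cos (s * x + Real.pi / 4) from
      if_neg (not_le.mpr h)]
    exact (base2 s x).congr_of_eventuallyEq heq

lemma dfun_cont (lam : ℝ) : Continuous (dfun lam) := by
  unfold dfun
  apply Continuous.if_le (by fun_prop) (by fun_prop) continuous_id continuous_const
  intro x hx
  subst hx
  simp only [mul_zero, zero_add, Real.exp_zero, mul_one, sqrt2s_cos]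

lemma u_cont (lam : ℝ) (u : ℝ → ℝ)
    (hu : ∀ x : ℝ, u x =
      if x ≤ 0 then Real.exp (Real.sqrt lam * x)
      else Real.sqrt 2 * Real.sin (Real.sqrt lam * x + Real.pi / 4)) : Continuous u := by
  rw [funext hu]
  apply Continuous.if_le (by fun_prop) (by fun_prop) continuous_id continuous_const
  intro x hx
  subst hx
  simp only [mul_zero, zero_add, Real.exp_zero]
  exact sqrt2_sin_pi4.symm

lemma dfun_deriv_neg (lam : ℝ) (u : ℝ → ℝ)
    (hu : ∀ x : ℝ, u x =
      if x ≤ 0 then Real.exp (Real.sqrt lam * x)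
      else Real.sqrt 2 * Real.sin (Real.sqrt lam * x + Real.pi / 4))
    (hlam : 0 ≤ lam) {x : ℝ} (hx : x < 0) :
    HasDerivAt (dfun lam) (lam * u x) x := by
  set s := Real.sqrt lam with hs
  have heq : ∀ᶠ y in 𝓝 x, dfun lam y = s * Real.exp (s * y) := by
    filter_upwards [Iio_mem_nhds hx] with y hy
    exact if_pos hy.le
  have hb := (base1 s x).const_mul s
  have hval : s * (s * Real.exp (s * x)) = lam * u x := by
    rw [hu x, if_pos hx.le, ← mul_assoc, Real.mul_self_sqrt hlam]
  rw [← hval]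
  exact hb.congr_of_eventuallyEq heq

lemma dfun_deriv_pos (lam : ℝ) (u : ℝ → ℝ)
    (hu : ∀ x : ℝ, u x =
      if x ≤ 0 then Real.exp (Real.sqrt lam * x)
      else Real.sqrt 2 * Real.sin (Real.sqrt lam * x + Real.pi / 4))
    (hlam : 0 ≤ lam) {x : ℝ} (hx : 0 < x) :
    HasDerivAt (dfun lam) (-(lam * u x)) x := by
  set s := Real.sqrt lam with hs
  have heq : ∀ᶠ y in 𝓝 x, dfun lam y = Real.sqrt 2 * s * Real.cos (s * y + Real.pi / 4) := by
    filter_upwards [Ioi_mem_nhds hx] with y hy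
    exact if_neg (not_le.mpr hy)
  have hb := base3 s x
  have hval : -(s * s * (Real.sqrt 2 * Real.sin (s * x + Real.pi / 4))) = -(lam * u x) := by
    rw [hu x, if_neg (not_le.mpr hx), Real.mul_self_sqrt hlam]
  rw [← hval]
  exact hb.congr_of_eventuallyEq heq

end derivs

lemma weak_part (lam : ℝ) (hlam : 0 < lam) (u : ℝ → ℝ)
    (hu : ∀ x : ℝ, u x =
      if x ≤ 0 then Real.exp (Real.sqrt lam * x)
      else Real.sqrt 2 * Real.sin (Real.sqrt lam * x + Real.pi / 4))
    (φ : ℝ → ℂ) (hφ : ContDiff ℝ (⊤ : ℕ∞) φ) (hφs : HasCompactSupport φ) :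
    (- ∫ x : ℝ, (u x : ℂ) * deriv (deriv φ) x)
      = (lam : ℂ) * ∫ x : ℝ, (Real.sign x : ℂ) * (u x : ℂ) * φ x := by
  have hu_c : Continuous u := u_cont lam u hu
  have hd_c : Continuous (dfun lam) := dfun_cont lam
  have hφ' : ContDiff ℝ ∞ φ := hφ.of_le (by simp)
  have hφd : ContDiff ℝ ∞ (deriv φ) := (contDiff_infty_iff_deriv.mp hφ').2
  have hφdd : ContDiff ℝ ∞ (deriv (deriv φ)) := (contDiff_infty_iff_deriv.mp hφd).2
  have hφ1 : ∀ x, HasDerivAt φ (deriv φ x) x :=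
    fun x => ((contDiff_infty_iff_deriv.mp hφ').1 x).hasDerivAt
  have hφ2 : ∀ x, HasDerivAt (deriv φ) (deriv (deriv φ) x) x :=
    fun x => ((contDiff_infty_iff_deriv.mp hφd).1 x).hasDerivAt
  -- choose R
  obtain ⟨r, hr⟩ := hφs.isBounded.subset_closedBall (0 : ℝ)
  set R : ℝ := |r| + 1 with hRdef
  have hR : 0 < R := by positivity
  have hsub : tsupport φ ⊆ Set.Ioo (-R) R := by
    intro x hx
    have := hr hx
    rw [Metric.mem_closedBall, Real.dist_eq, sub_zero] at this
    have h1 : |x| ≤ |r| := this.trans (le_abs_self r)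
    rw [abs_le] at h1
    constructor <;> [linarith [h1.1]; linarith [h1.2]]
  have φ0 : ∀ x : ℝ, x ∉ Set.Ioo (-R) R → φ x = 0 := fun x hx =>
    image_eq_zero_of_notMem_tsupport fun h => hx (hsub h)
  have hts : tsupport (deriv φ) ⊆ tsupport φ :=
    closure_minimal support_deriv_subset (isClosed_tsupport φ)
  have φd0 : ∀ x : ℝ, x ∉ Set.Ioo (-R) R → deriv φ x = 0 := by
    intro x hx
    by_contra hc
    exact hx (hsub (hts (subset_closure hc)))
  have φdd0 : ∀ x : ℝ, x ∉ Set.Ioo (-R) R → deriv (deriv φ) x = 0 := by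
    intro x hx
    by_contra hc
    exact hx (hsub (hts (support_deriv_subset hc)))
  -- the functions
  set A : ℝ → ℂ := fun x => (u x : ℂ) * deriv (deriv φ) x with hAdef
  set B : ℝ → ℂ := fun x => (u x : ℂ) * φ x with hBdef
  set E : ℝ → ℂ := fun x => (Real.sign x : ℂ) * (u x : ℂ) * φ x with hEdef
  set W : ℝ → ℂ := fun x => (u x : ℂ) * deriv φ x - (dfun lam x : ℂ) * φ x with hWdef
  have contA : Continuous A := by
    apply Continuous.mul _ hφdd.continuous
    exact Complex.continuous_ofReal.comp hu_c
  have contB : Continuous B := by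
    apply Continuous.mul _ hφ.continuous
    exact Complex.continuous_ofReal.comp hu_c
  have hWc : Continuous W := by
    apply Continuous.sub
    · exact (Complex.continuous_ofReal.comp hu_c).mul hφd.continuous
    · exact (Complex.continuous_ofReal.comp hd_c).mul hφ.continuous
  -- FTC on the two halves
  have hFTC1 : (∫ x in (-R)..(0:ℝ), (A x - (lam : ℂ) * B x)) = W 0 - W (-R) := by
    refine intervalIntegral.integral_eq_sub_of_hasDerivAt_of_le (by linarith)
      hWc.continuousOn (fun x hx => ?_)
      ((contA.sub (continuous_const.mul contB)).intervalIntegrable _ _)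
    have hD := (dfun_deriv_neg lam u hu hlam.le hx.2).ofReal_comp
    have hU := (aux_hasDerivAt lam u hu x).ofReal_comp
    have h3 := (hU.mul (hφ2 x)).sub (hD.mul (hφ1 x))
    convert h3 using 1
    · rfl
    simp only [hAdef, hBdef]
    push_cast
    ring
  have hFTC2 : (∫ x in (0:ℝ)..R, (A x + (lam : ℂ) * B x)) = W R - W 0 := by
    refine intervalIntegral.integral_eq_sub_of_hasDerivAt_of_le (by linarith)
      hWc.continuousOn (fun x hx => ?_)
      ((contA.add (continuous_const.mul contB)).intervalIntegrable _ _)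
    have hD := (dfun_deriv_pos lam u hu hlam.le hx.1).ofReal_comp
    have hU := (aux_hasDerivAt lam u hu x).ofReal_comp
    have h3 := (hU.mul (hφ2 x)).sub (hD.mul (hφ1 x))
    convert h3 using 1
    · rfl
    simp only [hAdef, hBdef]
    push_cast
    ring
  have hnotL : (-R) ∉ Set.Ioo (-R) R := fun h => lt_irrefl _ h.1
  have hnotR : R ∉ Set.Ioo (-R) R := fun h => lt_irrefl _ h.2
  have WL : W (-R) = 0 := by
    simp only [hWdef, φ0 _ hnotL, φd0 _ hnotL, mul_zero, sub_zero]
  have WR : W R = 0 := by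
    simp only [hWdef, φ0 _ hnotR, φd0 _ hnotR, mul_zero, sub_zero]
  -- linearity
  have hIA1 : IntervalIntegrable A volume (-R) 0 := contA.intervalIntegrable _ _
  have hIA2 : IntervalIntegrable A volume 0 R := contA.intervalIntegrable _ _
  have hIB1 : IntervalIntegrable B volume (-R) 0 := contB.intervalIntegrable _ _
  have hIB2 : IntervalIntegrable B volume 0 R := contB.intervalIntegrable _ _
  have hIB1' : IntervalIntegrable (fun x => (lam : ℂ) * B x) volume (-R) 0 :=
    (continuous_const.mul contB).intervalIntegrable _ _
  have hIB2' : IntervalIntegrable (fun x => (lam : ℂ) * B x) volume 0 R :=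
    (continuous_const.mul contB).intervalIntegrable _ _
  have hsum : ((∫ x in (-R)..(0:ℝ), A x) - (lam : ℂ) * ∫ x in (-R)..(0:ℝ), B x)
      + ((∫ x in (0:ℝ)..R, A x) + (lam : ℂ) * ∫ x in (0:ℝ)..R, B x) = 0 := by
    rw [← intervalIntegral.integral_const_mul, ← intervalIntegral.integral_const_mul,
      ← intervalIntegral.integral_sub hIA1 hIB1', ← intervalIntegral.integral_add hIA2 hIB2',
      hFTC1, hFTC2, WL, WR]
    ring
  -- full-line identifications
  have hsuppA : Function.support A ⊆ Set.Ioc (-R) R := by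
    intro x hx
    apply Set.Ioo_subset_Ioc_self
    by_contra hc
    exact hx (by simp [hAdef, φdd0 x hc])
  have hsuppE : Function.support E ⊆ Set.Ioc (-R) R := by
    intro x hx
    apply Set.Ioo_subset_Ioc_self
    by_contra hc
    exact hx (by simp [hEdef, φ0 x hc])
  have hAfull : (∫ x in (-R)..R, A x) = ∫ x : ℝ, A x :=
    intervalIntegral.integral_eq_integral_of_support_subset hsuppA
  have hEfull : (∫ x in (-R)..R, E x) = ∫ x : ℝ, E x :=
    intervalIntegral.integral_eq_integral_of_support_subset hsuppE
  have hAsplit : (∫ x in (-R)..(0:ℝ), A x) + (∫ x in (0:ℝ)..R, A x) = ∫ x in (-R)..R, A x :=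
    intervalIntegral.integral_add_adjacent_intervals hIA1 hIA2
  -- E on the two halves
  have hne : ∀ᵐ x : ℝ ∂volume, x ≠ 0 := by
    rw [ae_iff]
    simp only [ne_eq, not_not, setOf_eq_eq_singleton]
    exact measure_singleton 0
  have haeE : ∀ᵐ x ∂(volume.restrict (Set.Ioc (-R) 0)), E x = -B x := by
    filter_upwards [ae_restrict_mem measurableSet_Ioc, ae_restrict_of_ae hne] with x hx hxne
    have hxneg : x < 0 := lt_of_le_of_ne hx.2 hxne
    simp only [hEdef, hBdef, Real.sign_of_neg hxneg]
    push_cast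
    ring
  have hEeqB : ∀ x ∈ Set.Ioc (0:ℝ) R, E x = B x := by
    intro x hx
    simp only [hEdef, hBdef, Real.sign_of_pos hx.1]
    push_cast
    ring
  have hintE1 : IntegrableOn E (Set.Ioc (-R) 0) volume :=
    ((contB.neg.integrableOn_Ioc)).congr (haeE.mono fun x hx => hx.symm)
  have hintE2 : IntegrableOn E (Set.Ioc (0:ℝ) R) volume := by
    refine (contB.integrableOn_Ioc).congr ?_
    filter_upwards [ae_restrict_mem measurableSet_Ioc] with x hx
    exact (hEeqB x hx).symm
  have hEsplit : (∫ x in Set.Ioc (-R) 0, E x) + (∫ x in Set.Ioc (0:ℝ) R, E x)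
      = ∫ x in Set.Ioc (-R) R, E x := by
    rw [← setIntegral_union (Set.Ioc_disjoint_Ioc_of_le le_rfl) measurableSet_Ioc hintE1 hintE2,
      Set.Ioc_union_Ioc_eq_Ioc (by linarith) (by linarith)]
  have hE1 : (∫ x in Set.Ioc (-R) 0, E x) = - ∫ x in (-R)..(0:ℝ), B x := by
    rw [integral_congr_ae haeE, integral_neg, intervalIntegral.integral_of_le (by linarith : -R ≤ (0:ℝ))]
  have hE2 : (∫ x in Set.Ioc (0:ℝ) R, E x) = ∫ x in (0:ℝ)..R, B x := by
    rw [setIntegral_congr_fun measurableSet_Ioc hEeqB,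
      intervalIntegral.integral_of_le (by linarith : (0:ℝ) ≤ R)]
  have hEIoc : (∫ x in (-R)..R, E x) = ∫ x in Set.Ioc (-R) R, E x :=
    intervalIntegral.integral_of_le (by linarith)
  -- assemble
  have hER : (∫ x : ℝ, E x) = (∫ x in (0:ℝ)..R, B x) - ∫ x in (-R)..(0:ℝ), B x := by
    rw [← hEfull, hEIoc, ← hEsplit, hE1, hE2]
    ring
  have hAR : (∫ x : ℝ, A x) = (lam : ℂ) * (∫ x in (-R)..(0:ℝ), B x)
      - (lam : ℂ) * ∫ x in (0:ℝ)..R, B x := by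
    rw [← hAfull, ← hAsplit]
    linear_combination hsum
  calc - ∫ x : ℝ, A x = (lam : ℂ) * ((∫ x in (0:ℝ)..R, B x) - ∫ x in (-R)..(0:ℝ), B x) := by
        rw [hAR]; ring
    _ = (lam : ℂ) * ∫ x : ℝ, E x := by rw [hER]


/-- Lemma 5.1: for `λ > 0`, the function `u(x) = e^{√λ x}` for `x ≤ 0`,
`u(x) = √2 sin(√λ x + π/4)` for `x ≥ 0` is a weak solution of `sgn(x)(−u'') = λu`,
is square-integrable on `(−∞,0)` but not on `(0,∞)`. -/

theorem free_generalized_eigenfunction (lam : ℝ) (hlam : 0 < lam) (u : ℝ → ℝ)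
    (hu : ∀ x : ℝ, u x =
      if x ≤ 0 then Real.exp (Real.sqrt lam * x)
      else Real.sqrt 2 * Real.sin (Real.sqrt lam * x + Real.pi / 4)) :
    (∀ φ : ℝ → ℂ, ContDiff ℝ (⊤ : ℕ∞) φ → HasCompactSupport φ →
      (- ∫ x : ℝ, (u x : ℂ) * deriv (deriv φ) x)
        = (lam : ℂ) * ∫ x : ℝ, (Real.sign x : ℂ) * (u x : ℂ) * φ x) ∧
    IntegrableOn (fun x => u x ^ 2) (Set.Iio 0) volume ∧
    ¬ IntegrableOn (fun x => u x ^ 2) (Set.Ioi 0) volume := by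
  refine ⟨fun φ hφ hφs => weak_part lam hlam u hu φ hφ hφs, ?_, ?_⟩
  · have h := aux_exp_int (b := 2 * Real.sqrt lam) (by positivity)
    refine h.congr_fun (fun x hx => ?_) measurableSet_Iio
    rw [hu x, if_pos (Set.mem_Iio.mp hx).le, sq, ← Real.exp_add]
    congr 1
    ring
  · intro h
    refine aux_not_int (c := 2 * Real.sqrt lam) (by positivity) ?_
    refine h.congr_fun (fun x hx => ?_) measurableSet_Ioi
    beta_reduce
    rw [hu x, if_neg (not_le.mpr (Set.mem_Ioi.mp hx)), mul_pow,
      Real.sq_sqrt (by norm_num : (0:ℝ) ≤ 2), Real.sin_sq_eq_half_sub,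
      show 2 * (Real.sqrt lam * x + Real.pi / 4) = 2 * Real.sqrt lam * x + Real.pi / 2 by ring,
      Real.cos_add_pi_div_two]
    ring
end
end

section
/- Let p ≥ 1 be a real number and let s, t be real numbers with s > 0 and t ≥ 0. If 2^{3−2p} (t² + s²) s^{2p−2} ≤ √(t² + s²) + t, then s ≤ 2 · (3√3/16)^{1/(2p−1)}. -/
open MeasureTheory Filter Topology

noncomputable section

/-- The optimization step: if `2^{3−2p} (t² + s²) s^{2p−2} ≤ √(t² + s²) + t` with
`s > 0`, `t ≥ 0` and `p ≥ 1`, then `s ≤ 2 (3√3/16)^{1/(2p−1)}`. -/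
theorem optimization_step (p s t : ℝ) (hp : 1 ≤ p) (hs : 0 < s) (ht : 0 ≤ t)
    (h : (2 : ℝ) ^ (3 - 2 * p) * (t ^ 2 + s ^ 2) * s ^ (2 * p - 2) ≤
      Real.sqrt (t ^ 2 + s ^ 2) + t) :
    s ≤ 2 * (3 * Real.sqrt 3 / 16) ^ (1 / (2 * p - 1)) := by

  have hr0 : 0 < Real.sqrt (t ^ 2 + s ^ 2) := Real.sqrt_pos.mpr (by positivity)
  set r := Real.sqrt (t ^ 2 + s ^ 2) with hrdef
  have hr2 : r ^ 2 = t ^ 2 + s ^ 2 := Real.sq_sqrt (by positivity)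
  have h3sq : Real.sqrt 3 ^ 2 = 3 := Real.sq_sqrt (by norm_num)
  have h3 : (0:ℝ) < Real.sqrt 3 := by positivity
  have hrt : t ≤ r := by nlinarith [sq_nonneg s]
  -- key geometric inequality: s (r + t) ≤ (3√3/4) r²
  have key : s * (r + t) ≤ 3 * Real.sqrt 3 / 4 * r ^ 2 := by
    have h1 : (0:ℝ) ≤ s * (r + t) := by positivity
    have h2 : (0:ℝ) ≤ 3 * Real.sqrt 3 / 4 * r ^ 2 := by positivity
    have hssq : s ^ 2 = r ^ 2 - t ^ 2 := by linarith
    have hsq : (s * (r + t)) ^ 2 ≤ (3 * Real.sqrt 3 / 4 * r ^ 2) ^ 2 := by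
      have e1 : (s * (r + t)) ^ 2 = (r - t) * (r + t) ^ 3 := by
        calc (s * (r + t)) ^ 2 = s ^ 2 * (r + t) ^ 2 := by ring
          _ = (r ^ 2 - t ^ 2) * (r + t) ^ 2 := by rw [hssq]
          _ = (r - t) * (r + t) ^ 3 := by ring
      have e2 : (3 * Real.sqrt 3 / 4 * r ^ 2) ^ 2 = 27 / 16 * r ^ 4 := by
        have e3 : (3 * Real.sqrt 3 / 4 * r ^ 2) ^ 2
            = 9 * (Real.sqrt 3 ^ 2) / 16 * r ^ 4 := by ring
        rw [e3, h3sq]; ring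
      rw [e1, e2]
      nlinarith [mul_nonneg (sq_nonneg (2*t - r))
        (by positivity : (0:ℝ) ≤ 4*t^2 + 12*t*r + 11*r^2)]
    calc s * (r + t) = Real.sqrt ((s * (r + t)) ^ 2) := (Real.sqrt_sq h1).symm
      _ ≤ Real.sqrt ((3 * Real.sqrt 3 / 4 * r ^ 2) ^ 2) := Real.sqrt_le_sqrt hsq
      _ = 3 * Real.sqrt 3 / 4 * r ^ 2 := Real.sqrt_sq h2
  have hs1 : s ^ (2*p-2) * s = s ^ (2*p-1) := by
    rw [← Real.rpow_add_one hs.ne']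
    congr 1
    ring
  have h2pos : (0:ℝ) < 2 := two_pos
  have hApos : (0:ℝ) < (2:ℝ) ^ (3 - 2*p) := Real.rpow_pos_of_pos h2pos _
  have hBpos : (0:ℝ) < s ^ (2*p-2) := Real.rpow_pos_of_pos hs _
  have hCpos : (0:ℝ) < s ^ (2*p-1) := Real.rpow_pos_of_pos hs _
  have step : (2:ℝ) ^ (3 - 2*p) * s ^ (2*p-1) * r ^ 2 ≤ 3 * Real.sqrt 3 / 4 * r ^ 2 := by
    have h' := mul_le_mul_of_nonneg_left h hs.le
    calc (2:ℝ) ^ (3 - 2*p) * s ^ (2*p-1) * r ^ 2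
        = s * ((2:ℝ) ^ (3 - 2*p) * (t ^ 2 + s ^ 2) * s ^ (2*p-2)) := by
          rw [← hs1, ← hr2]; ring
      _ ≤ s * (r + t) := h'
      _ ≤ 3 * Real.sqrt 3 / 4 * r ^ 2 := key
  have hC : (2:ℝ) ^ (3 - 2*p) * s ^ (2*p-1) ≤ 3 * Real.sqrt 3 / 4 :=
    le_of_mul_le_mul_right (by nlinarith [step]) (by positivity : (0:ℝ) < r ^ 2)
  have hcancel : (2:ℝ) ^ (2*p-3) * (2:ℝ) ^ (3 - 2*p) = 1 := by
    rw [← Real.rpow_add h2pos]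
    norm_num
  have hpow : (2:ℝ) ^ (2*p-1) = (2:ℝ) ^ (2*p-3) * 4 := by
    have h22 : (2:ℝ) ^ ((2:ℝ)) = 4 := by
      rw [show ((2:ℝ)) = ((2:ℕ):ℝ) by norm_num, Real.rpow_natCast]; norm_num
    rw [show (2*p-1 : ℝ) = (2*p-3) + 2 by ring, Real.rpow_add h2pos, h22]
  have hD : s ^ (2*p-1) ≤ (2:ℝ) ^ (2*p-1) * (3 * Real.sqrt 3 / 16) := by
    have h4 := mul_le_mul_of_nonneg_left hC (Real.rpow_nonneg h2pos.le (2*p-3))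
    calc s ^ (2*p-1) = (2:ℝ) ^ (2*p-3) * (2:ℝ) ^ (3 - 2*p) * s ^ (2*p-1) := by
          rw [hcancel]; ring
      _ ≤ (2:ℝ) ^ (2*p-3) * (3 * Real.sqrt 3 / 4) := by
          rw [mul_assoc]; exact h4
      _ = (2:ℝ) ^ (2*p-1) * (3 * Real.sqrt 3 / 16) := by rw [hpow]; ring
  have hq : (0:ℝ) < 2*p-1 := by linarith
  have hfin := Real.rpow_le_rpow hCpos.le hD (by positivity : (0:ℝ) ≤ 1/(2*p-1))
  have hleft : (s ^ (2*p-1)) ^ (1/(2*p-1)) = s := by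
    rw [one_div, Real.rpow_rpow_inv hs.le hq.ne']
  have hright : ((2:ℝ) ^ (2*p-1) * (3 * Real.sqrt 3 / 16)) ^ (1/(2*p-1))
      = 2 * (3 * Real.sqrt 3 / 16) ^ (1/(2*p-1)) := by
    rw [Real.mul_rpow (by positivity) (by positivity), one_div,
      Real.rpow_rpow_inv h2pos.le hq.ne']
  rwa [hleft, hright] at hfin
end
end
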